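/- arXiv:1511.07324 — 8 statements merged into one kernel-verified Lean document; each statement's English description precedes it below -/
import Mathlib

section
/- Fix k ≥ 1, q ∈ (0,1), a partition λ ⊢ k of length ℓ, and nonzero complex numbers w_1,…,w_ℓ such that every factor appearing in a denominator below is nonzero. Let y_1,…,y_k be given by the q-string substitution y_{s_j+m} = q^{m−1}·w_j (for 1 ≤ j ≤ ℓ and 1 ≤ m ≤ λ_j). Then the rational expression N/D, where N = ∏_{1≤i≠j≤k} (y_i − y_j) and D is the product of (y_i − q·y_j) over all ordered pairs (i,j) with i ≠ j EXCEPT the within-string consecutive pairs (i,j) = (s_l+m, s_l+m−1) with 1 ≤ l ≤ ℓ and 2 ≤ m ≤ λ_l, equals (−1)^k (1−q)^k q^{−k²/2} ∏_{j=1}^{ℓ} w_j^{λ_j} q^{λ_j²/2} · [∏_{1≤i<j≤ℓ} (w_j − w_i)(w_i q^{λ_i} − w_j q^{λ_j})] / [∏_{i,j=1}^{ℓ} (w_i q^{λ_i} − w_j)], which moreover equals (−1)^k (1−q)^k q^{−k²/2} ∏_{j=1}^{ℓ} w_j^{λ_j} q^{λ_j²/2} · det[1/(w_i q^{λ_i}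 − w_j)]_{i,j=1}^{ℓ}. (This expression is the iterated residue Res^q_λ of ∏_{1≤i≠j≤k} (y_i−y_j)/(y_i−q y_j) along the q-strings, all the relevant poles being simple.) -/
open scoped Classical

/-- `s_j = λ_1 + ⋯ + λ_{j−1}` (0-based: the sum of the parts before the `j`-th one). -/
def sPart {ℓ : ℕ} (lam : Fin ℓ → ℕ) (j : Fin ℓ) : ℕ :=
  ∑ i ∈ Finset.univ.filter (fun i => i < j), lam i

/-- The within-string consecutive ordered pairs (0-based): `(i, j)` with `i = s_l + t`,
`1 ≤ t ≤ λ_l − 1` and `j + 1 = i`; these are the (1-based) pairs `(s_l+m, s_l+m−1)`,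
`2 ≤ m ≤ λ_l`, at which `y_i = q·y_j` under the `q`-string substitution. -/
def ConsecPair {k ℓ : ℕ} (lam : Fin ℓ → ℕ) (i j : Fin k) : Prop :=
  ∃ (l : Fin ℓ) (t : ℕ), 1 ≤ t ∧ t < lam l ∧ (i : ℕ) = sPart lam l + t ∧ (j : ℕ) + 1 = (i : ℕ)

namespace QStringAux
open Finset Polynomial Matrix

@[to_additive mysum_split_diag]
theorem myprod_split_diag {M : Type*} [CommMonoid M] {n : ℕ} (f : Fin n → Fin n → M) :
    ∏ a, ∏ b, f a b = (∏ a, f a a) * ∏ a, ∏ b, (if a ≠ b then f a b else 1) := by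
  rw [← Finset.prod_mul_distrib]
  refine Finset.prod_congr rfl fun a _ => ?_
  have : ∀ b, f a b = (if a = b then f a b else 1) * (if a ≠ b then f a b else 1) := by
    intro b; by_cases h : a = b <;> simp [h]
  rw [Finset.prod_congr rfl (fun b _ => this b), Finset.prod_mul_distrib,
    Finset.prod_ite_eq]
  simp

@[to_additive mysum_offdiag_pair]
theorem myprod_offdiag_pair {M : Type*} [CommMonoid M] {n : ℕ} (f : Fin n → Fin n → M) :
    ∏ a, ∏ b, (if a ≠ b then f a b else 1)
      = ∏ a, ∏ b, (if a < b then f a b * f b a else 1) := by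
  have h1 : ∀ a b : Fin n, (if a ≠ b then f a b else 1)
      = (if a < b then f a b else 1) * (if b < a then f a b else 1) := by
    intro a b
    rcases lt_trichotomy a b with h | h | h
    · simp [h, h.ne, h.not_gt, le_of_lt h]
    · simp [h, lt_irrefl]
    · simp [h, h.ne', h.not_gt]
  calc ∏ a, ∏ b, (if a ≠ b then f a b else 1)
      = (∏ a, ∏ b, (if a < b then f a b else 1)) *
        (∏ a, ∏ b, (if b < a then f a b else 1)) := by
        simp_rw [h1, Finset.prod_mul_distrib]
    _ = (∏ a, ∏ b, (if a < b then f a b else 1)) *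
        (∏ a, ∏ b, (if a < b then f b a else 1)) := by
        congr 1; rw [Finset.prod_comm]
    _ = ∏ a, ∏ b, (if a < b then f a b * f b a else 1) := by
        rw [← Finset.prod_mul_distrib]
        refine Finset.prod_congr rfl fun a _ => ?_
        rw [← Finset.prod_mul_distrib]
        refine Finset.prod_congr rfl fun b _ => ?_
        by_cases h : a < b <;> simp [h]


theorem myprod_telescope_div (f : ℕ → ℂ) :
    ∀ L : ℕ, (∀ n, 0 < n → n ≤ L → f n ≠ 0) →
      ∏ n ∈ range (L+1), (f n / f (n + 1)) = f 0 / f (L+1) := by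
  intro L
  induction L with
  | zero => simp
  | succ L ih =>
    intro h
    rw [prod_range_succ, ih (fun n hn hnL => h n hn (hnL.trans (Nat.le_succ _)))]
    rw [div_mul_div_comm, mul_comm (f 0), mul_div_mul_left]
    exact h (L+1) (Nat.succ_pos L) le_rfl

theorem myprod_const_mul (w : ℂ) (g : ℕ → ℂ) (L : ℕ) :
    ∏ n ∈ range L, (w * g n) = w ^ L * ∏ n ∈ range L, g n := by
  rw [prod_mul_distrib, prod_const, card_range]

theorem myprod_shift_pow (q c : ℂ) (L : ℕ) :
    ∏ n ∈ range L, (q ^ (n+1) - q * c) = q ^ L * ∏ n ∈ range L, (q ^ n - c) := by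
  calc ∏ n ∈ range L, (q ^ (n+1) - q * c) = ∏ n ∈ range L, (q * (q ^ n - c)) :=
        prod_congr rfl fun n _ => by ring
    _ = q ^ L * ∏ n ∈ range L, (q ^ n - c) := by
        rw [prod_mul_distrib, prod_const, card_range]

theorem myTL (q : ℂ) : ∀ L : ℕ,
    (1 - q ^ (L+1)) * ∏ n ∈ range L, (q ^ n - q ^ L)
      = (1 - q) * ∏ n ∈ range L, (q ^ n - q ^ (L+1)) := by
  intro L
  induction L with
  | zero => simp
  | succ L ih =>
    have key : ∀ M : ℕ, ∏ n ∈ range (L+1), (q ^ n - q ^ (M+1))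
        = (1 - q ^ (M+1)) * (q ^ L * ∏ n ∈ range L, (q ^ n - q ^ M)) := by
      intro M
      rw [prod_range_succ']
      have : ∀ n ∈ range L, q ^ (n+1) - q ^ (M+1) = q ^ (n+1) - q * q ^ M :=
        fun n _ => by ring
      rw [prod_congr rfl this, myprod_shift_pow]
      ring
    rw [key L, key (L+1)]
    ring_nf
    ring_nf at ih
    linear_combination (q ^ L - q ^ (L*2+2)) * ih



/-- The two-string cross identity, fully polynomial (no nonvanishing needed). -/
theorem crossEq (q u v : ℂ) : ∀ A B : ℕ,
    (∏ m ∈ range A, (q ^ m * u - v)) * (∏ n ∈ range B, (q ^ n * v - u)) *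
        ((q ^ A * u - v) * (q ^ B * v - u)) * q ^ (A * B)
      = (v - u) * (q ^ A * u - q ^ B * v) *
        (∏ m ∈ range A, (q ^ m * u - q ^ B * v)) * (∏ n ∈ range B, (q ^ n * v - q ^ A * u)) := by
  intro A
  induction A with
  | zero =>
    intro B
    have h : ∏ n ∈ range B, (q ^ n * v - u) = ∏ n ∈ range B, (q ^ n * v - q ^ 0 * u) :=
      prod_congr rfl fun n _ => by ring
    rw [h]; ring
  | succ A ih =>
    intro B
    have hPi : ∏ m ∈ range (A+1), (q ^ m * u - v)
        = (∏ m ∈ range A, (q ^ m * u - v)) * (q ^ A * u - v) := prod_range_succ _ _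
    have hTh : ∏ m ∈ range (A+1), (q ^ m * u - q ^ B * v)
        = (∏ m ∈ range A, (q ^ m * u - q ^ B * v)) * (q ^ A * u - q ^ B * v) :=
      prod_range_succ _ _
    rcases B with _ | B'
    · simp only [prod_range_zero, pow_zero, Nat.mul_zero, one_mul, mul_one]
      ring
    · have hPsp : ∏ n ∈ range (B'+1), (q ^ n * v - q ^ (A+1) * u)
          = q ^ B' * (∏ n ∈ range B', (q ^ n * v - q ^ A * u)) * (v - q ^ (A+1) * u) := by
        rw [prod_range_succ']
        rw [prod_congr rfl (fun n _ =>
          show q ^ (n+1) * v - q ^ (A+1) * u = q * (q ^ n * v - q ^ A * u) by ring),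
          myprod_const_mul]
        ring
      have hPs : ∏ n ∈ range (B'+1), (q ^ n * v - q ^ A * u)
          = (∏ n ∈ range B', (q ^ n * v - q ^ A * u)) * (q ^ B' * v - q ^ A * u) :=
        prod_range_succ _ _
      rw [hPi, hTh, hPsp]
      have ih' := ih (B'+1)
      rw [hPs] at ih'
      have hpow : q ^ ((A+1) * (B'+1)) = q ^ (A * (B'+1)) * q ^ (B'+1) := by
        rw [← pow_add]; ring_nf
      rw [hpow]
      linear_combination ((q * (q ^ A * u) - v) * q ^ (B'+1)) * ih'

theorem myprod2_succ (F : ℕ → ℕ → ℂ) (L : ℕ) :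
    ∏ m ∈ range (L+1), ∏ n ∈ range (L+1), F m n
      = (((∏ m ∈ range L, ∏ n ∈ range L, F m n) * (∏ m ∈ range L, F m L)) *
          (∏ n ∈ range L, F L n)) * F L L := by
  rw [prod_range_succ, prod_range_succ (f := fun n => F L n)]
  rw [prod_congr rfl (fun m _ => prod_range_succ (fun n => F m n) L), prod_mul_distrib]
  ring

noncomputable def Pw (q w : ℂ) (L : ℕ) : ℂ :=
  ∏ m ∈ range L, ∏ n ∈ range L, if m ≠ n then q ^ m * w - q ^ n * w else 1

noncomputable def Qw (q w : ℂ) (L : ℕ) : ℂ :=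
  ∏ m ∈ range L, ∏ n ∈ range L,
    if m ≠ n ∧ m ≠ n + 1 then q ^ m * w - q ^ (n+1) * w else 1


theorem within_string (q w : ℂ) : ∀ K : ℕ,
    Pw q w (K+1) * (1 - q ^ (K+1))
      = (-1) ^ K * (1 - q) ^ (K+1) * w ^ K * Qw q w (K+1) := by
  intro K
  induction K with
  | zero => simp [Pw, Qw]
  | succ K ih =>
    have hP : Pw q w (K+1+1) = Pw q w (K+1) *
        ((w ^ (K+1) * ∏ m ∈ range (K+1), (q ^ m - q ^ (K+1))) *
         (w ^ (K+1) * ∏ n ∈ range (K+1), (q ^ (K+1) - q ^ n))) := by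
      rw [Pw, myprod2_succ, ← Pw]
      have e1 : ∏ m ∈ range (K+1), (if m ≠ (K+1) then q ^ m * w - q ^ (K+1) * w else 1)
          = w ^ (K+1) * ∏ m ∈ range (K+1), (q ^ m - q ^ (K+1)) := by
        rw [prod_congr rfl (fun m hm => ?_), myprod_const_mul]
        rw [if_pos (mem_range.mp hm).ne]; ring
      have e2 : ∏ n ∈ range (K+1), (if ((K+1 : ℕ) ≠ n : Prop) then q ^ (K+1) * w - q ^ n * w else 1)
          = w ^ (K+1) * ∏ n ∈ range (K+1), (q ^ (K+1) - q ^ n) := by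
        rw [prod_congr rfl (fun n hn => ?_), myprod_const_mul]
        rw [if_pos (mem_range.mp hn).ne']; ring
      rw [e1, e2]
      simp; ring
    have hQ : Qw q w (K+1+1) = Qw q w (K+1) *
        ((w ^ (K+1) * ∏ m ∈ range (K+1), (q ^ m - q ^ (K+1+1))) *
         (w ^ K * ∏ n ∈ range K, (q ^ (K+1) - q ^ (n+1)))) := by
      rw [Qw, myprod2_succ, ← Qw]
      have e1 : ∏ m ∈ range (K+1), (if m ≠ (K+1) ∧ m ≠ (K+1) + 1 then q ^ m * w - q ^ ((K+1)+1) * w else 1)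
          = w ^ (K+1) * ∏ m ∈ range (K+1), (q ^ m - q ^ (K+1+1)) := by
        rw [prod_congr rfl (fun m hm => ?_), myprod_const_mul]
        rw [if_pos ⟨(mem_range.mp hm).ne, ((mem_range.mp hm).trans (Nat.lt_succ_self _)).ne⟩]
        ring
      have e2 : ∏ n ∈ range (K+1), (if ((K+1:ℕ) ≠ n ∧ (K+1:ℕ) ≠ n + 1 : Prop) then q ^ (K+1) * w - q ^ (n+1) * w else 1)
          = w ^ K * ∏ n ∈ range K, (q ^ (K+1) - q ^ (n+1)) := by
        rw [prod_range_succ, if_neg (by simp), mul_one,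
          prod_congr rfl (fun n hn => ?_), myprod_const_mul]
        rw [if_pos ⟨(Nat.lt_succ_of_lt (mem_range.mp hn)).ne',
          fun h => ((mem_range.mp hn).ne' (Nat.succ_injective h))⟩]
        ring
      rw [e1, e2]
      simp; ring
    have relC : (-1 : ℂ) ^ K * ∏ n ∈ range (K+1), (q ^ n - q ^ (K+1))
        = (1 - q ^ (K+1)) * ∏ n ∈ range K, (q ^ (K+1) - q ^ (n+1)) := by
      have h1 : ∏ n ∈ range (K+1), (q ^ (K+1) - q ^ n)
          = (q ^ (K+1) - 1) * ∏ n ∈ range K, (q ^ (K+1) - q ^ (n+1)) := by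
        rw [prod_range_succ' (fun n => q ^ (K+1) - q ^ n) K]; ring
      have h2 : ∏ n ∈ range (K+1), (q ^ (K+1) - q ^ n)
          = (-1) ^ (K+1) * ∏ n ∈ range (K+1), (q ^ n - q ^ (K+1)) := by
        rw [prod_congr rfl (fun n _ => show q ^ (K+1) - q ^ n = (-1) * (q ^ n - q ^ (K+1)) by ring),
          myprod_const_mul]
      rw [h1] at h2
      linear_combination h2
    have tl := myTL q (K+1)
    have hE2 : ((-1 : ℂ)) ^ K * (-1 : ℂ) ^ K = 1 := by
      rw [← pow_add]
      exact (neg_one_pow_eq_one_iff_even (by norm_num)).mpr ⟨K, rfl⟩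
    have hSign : ∏ n ∈ range (K+1), (q ^ (K+1) - q ^ n)
        = (-1) ^ (K+1) * ∏ n ∈ range (K+1), (q ^ n - q ^ (K+1)) := by
      rw [prod_congr rfl (fun n _ => show q ^ (K+1) - q ^ n = (-1) * (q ^ n - q ^ (K+1)) by ring),
        myprod_const_mul]
    rw [hP, hQ]
    linear_combination (Pw q w (K+1) * w^2 * w^(K*2) * (∏ n ∈ range (K+1), (q ^ n - q ^ (K+1))) * (1 - q^(K+1+1))) * hSign + (-((-1:ℂ)^K) * w^(2*K+2)) *
        ((Pw q w (K+1)) * (∏ n ∈ range (K+1), (q ^ n - q ^ (K+1))) * tl +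
         (1-q) * (∏ n ∈ range (K+1), (q ^ n - q ^ (K+1+1))) *
           ((Pw q w (K+1)) * ((-1:ℂ)^K) * relC + ((-1:ℂ)^K) * (∏ n ∈ range K, (q ^ (K+1) - q ^ (n+1))) * ih
            - ((Pw q w (K+1)) * (∏ n ∈ range (K+1), (q ^ n - q ^ (K+1))) -
               (1-q)^(K+1) * w^K * (Qw q w (K+1)) * (∏ n ∈ range K, (q ^ (K+1) - q ^ (n+1)))) * hE2))

theorem my_cauchy_det {n : ℕ} (x w : Fin n → ℂ) (hxw : ∀ i j, x i - w j ≠ 0) :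
    Matrix.det (Matrix.of fun i j : Fin n => 1 / (x i - w j))
      = (∏ i : Fin n, ∏ j : Fin n, if i < j then (w j - w i) * (x i - x j) else 1) /
        (∏ i : Fin n, ∏ j : Fin n, (x i - w j)) := by
  by_cases hw : Function.Injective w
  swap
  · -- degenerate: two equal columns, and numerator has a zero factor
    simp only [Function.Injective] at hw
    push_neg at hw
    obtain ⟨i, j, hij, hne⟩ := hw
    have hdet : Matrix.det (Matrix.of fun i j : Fin n => 1 / (x i - w j)) = 0 := by
      apply Matrix.det_zero_of_column_eq hne
      intro k
      simp only [Matrix.of_apply, hij]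
    rcases lt_or_gt_of_ne hne with h | h
    · rw [hdet, Finset.prod_eq_zero (Finset.mem_univ i) (Finset.prod_eq_zero (Finset.mem_univ j)
        (by rw [if_pos h, hij, sub_self, zero_mul])), zero_div]
    · rw [hdet, Finset.prod_eq_zero (Finset.mem_univ j) (Finset.prod_eq_zero (Finset.mem_univ i)
        (by rw [if_pos h, hij, sub_self, zero_mul])), zero_div]
  · set P : Fin n → ℂ[X] := fun j => ∏ j' ∈ Finset.univ.erase j, (X - C (w j')) with hP
    have hmonic : ∀ j, (P j).Monic := fun j => monic_prod_of_monic _ _ fun j' _ => monic_X_sub_C _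
    have hdeg : ∀ j, (P j).natDegree < n := by
      intro j
      rw [hP]
      rw [natDegree_prod_of_monic _ _ fun j' _ => monic_X_sub_C _]
      simp only [natDegree_X_sub_C, Finset.sum_const, smul_eq_mul, mul_one]
      rw [Finset.card_erase_of_mem (Finset.mem_univ j), Finset.card_univ, Fintype.card_fin]
      exact Nat.sub_lt (Nat.pos_of_ne_zero (by rintro rfl; exact j.elim0)) one_pos
    have hVC : ∀ v : Fin n → ℂ, Matrix.of (fun i j => (P j).eval (v i))
        = Matrix.vandermonde v * Matrix.of (fun r j : Fin n => (P j).coeff r) := by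
      intro v
      ext i j
      rw [Matrix.mul_apply, Matrix.of_apply, eval_eq_sum_range' (hdeg j),
        ← Fin.sum_univ_eq_sum_range]
      exact Finset.sum_congr rfl fun r _ => by
        rw [Matrix.vandermonde, Matrix.of_apply, Matrix.of_apply]; ring
    -- diagonal evaluation matrix
    have hDm : Matrix.of (fun i j => (P j).eval (w i))
        = Matrix.diagonal (fun j => (P j).eval (w j)) := by
      ext i j
      by_cases h : i = j
      · subst h; simp [Matrix.diagonal]
      · rw [Matrix.diagonal_apply_ne _ h, Matrix.of_apply, hP]
        rw [eval_prod]
        exact Finset.prod_eq_zero (Finset.mem_erase.mpr ⟨h, Finset.mem_univ i⟩)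
          (by simp)
    have hBA : Matrix.of (fun i j => (P j).eval (x i))
        = Matrix.of (fun i j : Fin n =>
            (∏ j' : Fin n, (x i - w j')) * Matrix.of (fun i j : Fin n => 1 / (x i - w j)) i j) := by
      ext i j
      rw [Matrix.of_apply, Matrix.of_apply, Matrix.of_apply, hP, eval_prod]
      rw [← Finset.mul_prod_erase Finset.univ _ (Finset.mem_univ j)]
      rw [mul_one_div, mul_comm (x i - w j), mul_div_assoc, div_self (hxw i j), mul_one]
      exact Finset.prod_congr rfl fun j' _ => by simp
    -- determinants
    have hdetD : (Matrix.diagonal (fun j => (P j).eval (w j))).det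
        = ∏ j, ∏ j' ∈ Finset.univ.erase j, (w j - w j') := by
      rw [Matrix.det_diagonal]
      refine Finset.prod_congr rfl fun j _ => ?_
      simp only [hP, eval_prod, eval_sub, eval_X, eval_C]
    have hVw : (Matrix.vandermonde w).det ≠ 0 := Matrix.det_vandermonde_ne_zero_iff.mpr hw
    have hkey : (∏ i : Fin n, ∏ j' : Fin n, (x i - w j')) *
        (Matrix.of fun i j : Fin n => 1 / (x i - w j)).det * (Matrix.vandermonde w).det
        = (Matrix.vandermonde x).det * (∏ j, ∏ j' ∈ Finset.univ.erase j, (w j - w j')) := by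
      rw [← hdetD, ← hDm, hVC w, ← Matrix.det_mul_column, ← hBA, hVC x, Matrix.det_mul,
        Matrix.det_mul]
      ring
    -- convert everything to if-form double products
    have hIoi : ∀ (v : Fin n → ℂ) (g : Fin n → Fin n → ℂ),
        (∏ i, ∏ j ∈ Finset.Ioi i, g i j) = ∏ i, ∏ j, if i < j then g i j else 1 := by
      intro v g
      refine Finset.prod_congr rfl fun i _ => ?_
      rw [← Finset.filter_lt_eq_Ioi, Finset.prod_filter]
    have herase : (∏ j, ∏ j' ∈ Finset.univ.erase j, (w j - w j'))
        = ∏ a, ∏ b, (if a ≠ b then w a - w b else 1) := by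
      refine Finset.prod_congr rfl fun j _ => ?_
      rw [← Finset.filter_ne' Finset.univ j, Finset.prod_filter]
      refine Finset.prod_congr rfl fun j' _ => ?_
      by_cases h : j' = j
      · simp [h]
      · rw [if_pos h, if_pos (Ne.symm h)]
    have hR : (∏ i : Fin n, ∏ j' : Fin n, (x i - w j')) ≠ 0 :=
      Finset.prod_ne_zero_iff.mpr fun i _ => Finset.prod_ne_zero_iff.mpr fun j _ => hxw i j
    rw [Matrix.det_vandermonde, Matrix.det_vandermonde, hIoi x, hIoi w, herase,
      myprod_offdiag_pair] at hkey
    rw [eq_div_iff hR]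
    apply mul_right_cancel₀ (b := ∏ i, ∏ j, if i < j then w j - w i else 1)
    · rw [← hIoi w (fun i j => w j - w i), ← Matrix.det_vandermonde]
      exact hVw
    · calc (Matrix.of fun i j : Fin n => 1 / (x i - w j)).det *
            (∏ i : Fin n, ∏ j : Fin n, (x i - w j)) *
            (∏ i, ∏ j, if i < j then w j - w i else 1)
          = (∏ i : Fin n, ∏ j' : Fin n, (x i - w j')) *
            (Matrix.of fun i j : Fin n => 1 / (x i - w j)).det *
            (∏ i, ∏ j, if i < j then w j - w i else 1) := by ring
        _ = (∏ i, ∏ j, if i < j then x j - x i else 1) *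
            ∏ a, ∏ b, (if a < b then (w a - w b) * (w b - w a) else 1) := hkey
        _ = (∏ i : Fin n, ∏ j : Fin n, if i < j then (w j - w i) * (x i - x j) else 1) *
            (∏ i, ∏ j, if i < j then w j - w i else 1) := by
            rw [← Finset.prod_mul_distrib, ← Finset.prod_mul_distrib]
            refine Finset.prod_congr rfl fun i _ => ?_
            rw [← Finset.prod_mul_distrib, ← Finset.prod_mul_distrib]
            refine Finset.prod_congr rfl fun j _ => ?_
            by_cases h : i < j
            · simp only [if_pos h]; ring
            · simp [h]

section sPartLemmas
variable {ℓ k : ℕ} (lam : Fin ℓ → ℕ)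

theorem sPart_add_le {a b : Fin ℓ} (hab : a < b) : sPart lam a + lam a ≤ sPart lam b := by
  have hsub : insert a (Finset.univ.filter (fun i => i < a)) ⊆
      Finset.univ.filter (fun i => i < b) := by
    intro i hi
    rcases Finset.mem_insert.mp hi with rfl | hi
    · exact Finset.mem_filter.mpr ⟨Finset.mem_univ _, hab⟩
    · exact Finset.mem_filter.mpr ⟨Finset.mem_univ _,
        lt_trans (Finset.mem_filter.mp hi).2 hab⟩
  have hnot : a ∉ Finset.univ.filter (fun i => i < a) := by simp
  calc sPart lam a + lam a = ∑ i ∈ insert a (Finset.univ.filter (fun i => i < a)), lam i := by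
        rw [Finset.sum_insert hnot, sPart, add_comm]
    _ ≤ sPart lam b := Finset.sum_le_sum_of_subset hsub

theorem sPart_add_lt (hsum : ∑ j, lam j = k) (a : Fin ℓ) {m : ℕ} (hm : m < lam a) :
    sPart lam a + m < k := by
  have hnot : a ∉ Finset.univ.filter (fun i => i < a) := by simp
  have h1 : sPart lam a + lam a ≤ k := by
    calc sPart lam a + lam a = ∑ i ∈ insert a (Finset.univ.filter (fun i => i < a)), lam i := by
          rw [Finset.sum_insert hnot, sPart, add_comm]
      _ ≤ ∑ j, lam j := Finset.sum_le_sum_of_subset (Finset.subset_univ _)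
      _ = k := hsum
  omega

theorem sPart_unique {a b : Fin ℓ} {m n : ℕ} (hm : m < lam a) (hn : n < lam b)
    (h : sPart lam a + m = sPart lam b + n) : a = b ∧ m = n := by
  rcases lt_trichotomy a b with hab | hab | hab
  · have := sPart_add_le lam hab; omega
  · exact ⟨hab, by subst hab; omega⟩
  · have := sPart_add_le lam hab; omega

end sPartLemmas

section Phi
variable {ℓ k : ℕ} (lam : Fin ℓ → ℕ) (hsum : ∑ j, lam j = k)

/-- The string-coordinates-to-index map. -/
def phiMap (p : Σ a : Fin ℓ, Fin (lam a)) : Fin k :=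
  ⟨sPart lam p.1 + p.2, sPart_add_lt lam hsum p.1 p.2.isLt⟩

theorem phiMap_bijective : Function.Bijective (phiMap lam hsum) := by
  rw [Fintype.bijective_iff_injective_and_card]
  constructor
  · rintro ⟨a, m⟩ ⟨b, n⟩ h
    have h' : sPart lam a + (m : ℕ) = sPart lam b + (n : ℕ) := congrArg Fin.val h
    obtain ⟨rfl, hmn⟩ := sPart_unique lam m.isLt n.isLt h'
    exact congrArg (Sigma.mk a) (Fin.ext hmn)
  · rw [Fintype.card_sigma, Fintype.card_fin]
    simp only [Fintype.card_fin]
    exact hsum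

theorem phiMap_ne_iff {a b : Fin ℓ} (m : Fin (lam a)) (n : Fin (lam b)) :
    phiMap lam hsum ⟨a, m⟩ ≠ phiMap lam hsum ⟨b, n⟩ ↔ ¬(a = b ∧ (m : ℕ) = (n : ℕ)) := by
  constructor
  · rintro h ⟨rfl, hmn⟩
    exact h (congrArg (phiMap lam hsum) (congrArg (Sigma.mk a) (Fin.ext hmn)))
  · intro h hne
    have h' : sPart lam a + (m : ℕ) = sPart lam b + (n : ℕ) := congrArg Fin.val hne
    obtain ⟨rfl, hmn⟩ := sPart_unique lam m.isLt n.isLt h'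
    exact h ⟨rfl, hmn⟩

theorem phiMap_consec_iff {a b : Fin ℓ} (m : Fin (lam a)) (n : Fin (lam b)) :
    ConsecPair lam (phiMap lam hsum ⟨a, m⟩) (phiMap lam hsum ⟨b, n⟩)
      ↔ (a = b ∧ (n : ℕ) + 1 = (m : ℕ)) := by
  constructor
  · rintro ⟨l, t, h1t, htl, hi, hj⟩
    have hi' : sPart lam a + (m : ℕ) = sPart lam l + t := hi
    obtain ⟨rfl, rfl⟩ := sPart_unique lam m.isLt htl hi'
    have hj' : sPart lam b + (n : ℕ) + 1 = sPart lam a + (m : ℕ) := hj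
    have hm1 : (m : ℕ) - 1 < lam a := by omega
    have h2 : sPart lam b + (n : ℕ) = sPart lam a + ((m : ℕ) - 1) := by omega
    obtain ⟨rfl, hmn⟩ := sPart_unique lam n.isLt hm1 h2
    exact ⟨rfl, by omega⟩
  · rintro ⟨rfl, hmn⟩
    exact ⟨a, m, by omega, m.isLt, rfl, by show sPart lam a + (n:ℕ) + 1 = sPart lam a + (m:ℕ); omega⟩

theorem double_reindex (G : Fin k → Fin k → ℂ) :
    ∏ i, ∏ j, G i j
      = ∏ a : Fin ℓ, ∏ b : Fin ℓ, ∏ m : Fin (lam a), ∏ n : Fin (lam b),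
          G (phiMap lam hsum ⟨a, m⟩) (phiMap lam hsum ⟨b, n⟩) := by
  have h1 : ∀ (F : Fin k → ℂ), ∏ i, F i
      = ∏ a : Fin ℓ, ∏ m : Fin (lam a), F (phiMap lam hsum ⟨a, m⟩) := by
    intro F
    rw [← Fintype.prod_bijective (phiMap lam hsum) (phiMap_bijective lam hsum)
      (fun p => F (phiMap lam hsum p)) F (fun _ => rfl)]
    rw [← Finset.univ_sigma_univ, Finset.prod_sigma]
  rw [h1 (fun i => ∏ j, G i j)]
  refine Finset.prod_congr rfl fun a _ => ?_
  rw [Finset.prod_congr rfl (fun (m : Fin (lam a)) _ =>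
    h1 (fun j => G (phiMap lam hsum ⟨a, m⟩) j))]
  exact Finset.prod_comm

end Phi

theorem myrpow_sum {α : Type*} (q : ℝ) (hq : 0 < q) (s : Finset α) (f : α → ℝ) :
    ∏ a ∈ s, q ^ f a = q ^ (∑ a ∈ s, f a) := by
  classical
  induction s using Finset.cons_induction with
  | empty => simp
  | cons a s ha ih => rw [prod_cons, sum_cons, ih, ← Real.rpow_add hq]

end QStringAux
open QStringAux Finset in
/-- Lemma 7.4: evaluation of the iterated residue `Res^q_λ` of
`∏_{i≠j} (y_i − y_j)/(y_i − q y_j)` along the `q`-strings of a partition `λ ⊢ k`. -/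
theorem q_string_residue_typeA
    (k : ℕ) (hk : 1 ≤ k) (q : ℝ) (hq0 : 0 < q) (hq1 : q < 1)
    (ℓ : ℕ) (lam : Fin ℓ → ℕ)
    (hpos : ∀ j, 0 < lam j) (hmono : ∀ i j : Fin ℓ, i ≤ j → lam j ≤ lam i)
    (hsum : ∑ j, lam j = k)
    (w : Fin ℓ → ℂ) (hw : ∀ j, w j ≠ 0)
    (y : Fin k → ℂ)
    (hy : ∀ (j : Fin ℓ) (m : ℕ), m < lam j → ∀ h : sPart lam j + m < k,
      y ⟨sPart lam j + m, h⟩ = (q : ℂ) ^ m * w j)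
    (hden : ∀ i j : Fin k, i ≠ j → ¬ ConsecPair lam i j → y i - (q : ℂ) * y j ≠ 0)
    (hden' : ∀ i j : Fin ℓ, w i * (q : ℂ) ^ lam i - w j ≠ 0) :
    ((∏ i : Fin k, ∏ j : Fin k, if i ≠ j then y i - y j else 1) /
      (∏ i : Fin k, ∏ j : Fin k,
        if i ≠ j ∧ ¬ ConsecPair lam i j then y i - (q : ℂ) * y j else 1)
    = (-1 : ℂ) ^ k * ((1 - q : ℝ) : ℂ) ^ k * ((q ^ (-(k : ℝ) ^ 2 / 2) : ℝ) : ℂ) *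
        (∏ j : Fin ℓ, w j ^ lam j * ((q ^ ((lam j : ℝ) ^ 2 / 2) : ℝ) : ℂ)) *
        ((∏ i : Fin ℓ, ∏ j : Fin ℓ,
            if i < j then (w j - w i) * (w i * (q : ℂ) ^ lam i - w j * (q : ℂ) ^ lam j)
            else 1) /
          (∏ i : Fin ℓ, ∏ j : Fin ℓ, (w i * (q : ℂ) ^ lam i - w j))))
    ∧
    ((∏ i : Fin k, ∏ j : Fin k, if i ≠ j then y i - y j else 1) /
      (∏ i : Fin k, ∏ j : Fin k,
        if i ≠ j ∧ ¬ ConsecPair lam i j then y i - (q : ℂ) * y j else 1)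
    = (-1 : ℂ) ^ k * ((1 - q : ℝ) : ℂ) ^ k * ((q ^ (-(k : ℝ) ^ 2 / 2) : ℝ) : ℂ) *
        (∏ j : Fin ℓ, w j ^ lam j * ((q ^ ((lam j : ℝ) ^ 2 / 2) : ℝ) : ℂ)) *
        Matrix.det (Matrix.of fun i j : Fin ℓ => 1 / (w i * (q : ℂ) ^ lam i - w j))) := by
  -- basic nonvanishing facts
  have hqC : (q : ℂ) ≠ 0 := by
    simpa using ne_of_gt hq0
  have hpowC : ∀ m n : ℕ, m ≠ n → ((q : ℂ) ^ m - (q : ℂ) ^ n) ≠ 0 := by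
    intro m n h he
    have h2 : (q : ℝ) ^ m = (q : ℝ) ^ n := by
      have : ((q ^ m : ℝ) : ℂ) = ((q ^ n : ℝ) : ℂ) := by
        push_cast
        exact sub_eq_zero.mp he
      exact_mod_cast this
    exact h (pow_right_injective₀ hq0 (ne_of_lt hq1) h2)
  have h1mq : ∀ L : ℕ, 0 < L → (1 : ℂ) - (q : ℂ) ^ L ≠ 0 := by
    intro L hL
    have := hpowC 0 L (by omega)
    simpa using this
  have hyphi : ∀ (a : Fin ℓ) (m : Fin (lam a)),
      y (phiMap lam hsum ⟨a, m⟩) = (q : ℂ) ^ (m : ℕ) * w a := fun a m =>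
    hy a m m.isLt _
  have hcden : ∀ a b : Fin ℓ, a ≠ b → ∀ m n : ℕ, m < lam a → n < lam b →
      (q : ℂ) ^ m * w a - (q : ℂ) ^ (n + 1) * w b ≠ 0 := by
    intro a b hab m n hm hn
    have hne : phiMap lam hsum ⟨a, ⟨m, hm⟩⟩ ≠ phiMap lam hsum ⟨b, ⟨n, hn⟩⟩ :=
      (phiMap_ne_iff lam hsum _ _).mpr (by tauto)
    have hnc : ¬ ConsecPair lam (phiMap lam hsum ⟨a, ⟨m, hm⟩⟩) (phiMap lam hsum ⟨b, ⟨n, hn⟩⟩) := by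
      rw [phiMap_consec_iff]; tauto
    have hd := hden _ _ hne hnc
    rw [hyphi, hyphi] at hd
    intro he
    apply hd
    linear_combination he
  -- reindex numerator into blocks
  have hN : (∏ i : Fin k, ∏ j : Fin k, if i ≠ j then y i - y j else 1)
      = ∏ a : Fin ℓ, ∏ b : Fin ℓ, (if a = b then Pw (q : ℂ) (w a) (lam a)
          else ∏ m ∈ range (lam a), ∏ n ∈ range (lam b),
            ((q : ℂ) ^ m * w a - (q : ℂ) ^ n * w b)) := by
    rw [double_reindex lam hsum (fun i j => if i ≠ j then y i - y j else 1)]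
    refine prod_congr rfl fun a _ => prod_congr rfl fun b _ => ?_
    by_cases hab : a = b
    · subst hab
      rw [if_pos rfl, Pw]
      have hpt : ∀ (m n : Fin (lam a)),
          (if phiMap lam hsum ⟨a, m⟩ ≠ phiMap lam hsum ⟨a, n⟩
            then y (phiMap lam hsum ⟨a, m⟩) - y (phiMap lam hsum ⟨a, n⟩) else 1)
          = (if (m : ℕ) ≠ (n : ℕ)
              then (q:ℂ) ^ (m:ℕ) * w a - (q:ℂ) ^ (n:ℕ) * w a else 1) := by
        intro m n
        refine if_congr ?_ (by rw [hyphi, hyphi]) rfl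
        rw [phiMap_ne_iff]
        simp
      rw [prod_congr rfl fun m _ => prod_congr rfl fun n _ => hpt m n]
      rw [prod_congr rfl (fun (m : Fin (lam a)) _ =>
        Fin.prod_univ_eq_prod_range (fun n => if (m : ℕ) ≠ n
          then (q:ℂ) ^ (m:ℕ) * w a - (q:ℂ) ^ n * w a else 1) (lam a))]
      exact Fin.prod_univ_eq_prod_range (fun m => ∏ n ∈ range (lam a),
        if m ≠ n then (q:ℂ) ^ m * w a - (q:ℂ) ^ n * w a else 1) (lam a)
    · rw [if_neg hab]
      have hpt : ∀ (m : Fin (lam a)) (n : Fin (lam b)),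
          (if phiMap lam hsum ⟨a, m⟩ ≠ phiMap lam hsum ⟨b, n⟩
            then y (phiMap lam hsum ⟨a, m⟩) - y (phiMap lam hsum ⟨b, n⟩) else 1)
          = (q:ℂ) ^ (m:ℕ) * w a - (q:ℂ) ^ (n:ℕ) * w b := by
        intro m n
        rw [if_pos ((phiMap_ne_iff lam hsum m n).mpr (by tauto)), hyphi, hyphi]
      rw [prod_congr rfl fun m _ => prod_congr rfl fun n _ => hpt m n]
      rw [prod_congr rfl (fun (m : Fin (lam a)) _ =>
        Fin.prod_univ_eq_prod_range (fun n =>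
          (q:ℂ) ^ (m:ℕ) * w a - (q:ℂ) ^ n * w b) (lam b))]
      exact Fin.prod_univ_eq_prod_range (fun m => ∏ n ∈ range (lam b),
        ((q:ℂ) ^ m * w a - (q:ℂ) ^ n * w b)) (lam a)
  -- reindex denominator into blocks
  have hD : (∏ i : Fin k, ∏ j : Fin k,
        if i ≠ j ∧ ¬ ConsecPair lam i j then y i - (q : ℂ) * y j else 1)
      = ∏ a : Fin ℓ, ∏ b : Fin ℓ, (if a = b then Qw (q : ℂ) (w a) (lam a)
          else ∏ m ∈ range (lam a), ∏ n ∈ range (lam b),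
            ((q : ℂ) ^ m * w a - (q : ℂ) ^ (n+1) * w b)) := by
    rw [double_reindex lam hsum
      (fun i j => if i ≠ j ∧ ¬ ConsecPair lam i j then y i - (q:ℂ) * y j else 1)]
    refine prod_congr rfl fun a _ => prod_congr rfl fun b _ => ?_
    by_cases hab : a = b
    · subst hab
      rw [if_pos rfl, Qw]
      have hpt : ∀ (m n : Fin (lam a)),
          (if phiMap lam hsum ⟨a, m⟩ ≠ phiMap lam hsum ⟨a, n⟩ ∧
              ¬ ConsecPair lam (phiMap lam hsum ⟨a, m⟩) (phiMap lam hsum ⟨a, n⟩)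
            then y (phiMap lam hsum ⟨a, m⟩) - (q:ℂ) * y (phiMap lam hsum ⟨a, n⟩) else 1)
          = (if ((m : ℕ) ≠ (n : ℕ) ∧ (m : ℕ) ≠ (n : ℕ) + 1)
              then (q:ℂ) ^ (m:ℕ) * w a - (q:ℂ) ^ ((n:ℕ)+1) * w a else 1) := by
        intro m n
        refine if_congr ?_ (by rw [hyphi, hyphi]; ring) rfl
        rw [phiMap_ne_iff, phiMap_consec_iff]
        constructor
        · rintro ⟨h1, h2⟩; exact ⟨fun he => h1 ⟨rfl, he⟩, fun he => h2 ⟨rfl, he.symm⟩⟩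
        · rintro ⟨h1, h2⟩
          exact ⟨fun he => h1 he.2, fun he => h2 he.2.symm⟩
      rw [prod_congr rfl fun m _ => prod_congr rfl fun n _ => hpt m n]
      rw [prod_congr rfl (fun (m : Fin (lam a)) _ =>
        Fin.prod_univ_eq_prod_range (fun n => if ((m:ℕ) ≠ n ∧ (m:ℕ) ≠ n + 1)
          then (q:ℂ) ^ (m:ℕ) * w a - (q:ℂ) ^ (n+1) * w a else 1) (lam a))]
      exact Fin.prod_univ_eq_prod_range (fun m => ∏ n ∈ range (lam a),
        if (m ≠ n ∧ m ≠ n + 1) then (q:ℂ) ^ m * w a - (q:ℂ) ^ (n+1) * w a else 1) (lam a)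
    · rw [if_neg hab]
      have hpt : ∀ (m : Fin (lam a)) (n : Fin (lam b)),
          (if phiMap lam hsum ⟨a, m⟩ ≠ phiMap lam hsum ⟨b, n⟩ ∧
              ¬ ConsecPair lam (phiMap lam hsum ⟨a, m⟩) (phiMap lam hsum ⟨b, n⟩)
            then y (phiMap lam hsum ⟨a, m⟩) - (q:ℂ) * y (phiMap lam hsum ⟨b, n⟩) else 1)
          = (q:ℂ) ^ (m:ℕ) * w a - (q:ℂ) ^ ((n:ℕ)+1) * w b := by
        intro m n
        rw [if_pos ⟨(phiMap_ne_iff lam hsum m n).mpr (by tauto),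
          fun hc => hab ((phiMap_consec_iff lam hsum m n).mp hc).1⟩, hyphi, hyphi]
        ring
      rw [prod_congr rfl fun m _ => prod_congr rfl fun n _ => hpt m n]
      rw [prod_congr rfl (fun (m : Fin (lam a)) _ =>
        Fin.prod_univ_eq_prod_range (fun n =>
          (q:ℂ) ^ (m:ℕ) * w a - (q:ℂ) ^ (n+1) * w b) (lam b))]
      exact Fin.prod_univ_eq_prod_range (fun m => ∏ n ∈ range (lam b),
        ((q:ℂ) ^ m * w a - (q:ℂ) ^ (n+1) * w b)) (lam a)
  -- nonvanishing of the block denominators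
  have hQwne : ∀ a : Fin ℓ, Qw (q : ℂ) (w a) (lam a) ≠ 0 := by
    intro a
    rw [Qw]
    refine prod_ne_zero_iff.mpr fun m _ => prod_ne_zero_iff.mpr fun n _ => ?_
    by_cases hc : m ≠ n ∧ m ≠ n + 1
    · rw [if_pos hc]
      intro h0
      have h1 : ((q:ℂ) ^ m - (q:ℂ) ^ (n+1)) * w a = 0 := by linear_combination h0
      rcases mul_eq_zero.mp h1 with h2 | h2
      · exact hpowC m (n+1) hc.2 h2
      · exact hw a h2
    · rw [if_neg hc]; exact one_ne_zero
  have hDcne : ∀ a b : Fin ℓ, a ≠ b →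
      (∏ m ∈ range (lam a), ∏ n ∈ range (lam b),
        ((q : ℂ) ^ m * w a - (q : ℂ) ^ (n+1) * w b)) ≠ 0 := by
    intro a b hab
    exact prod_ne_zero_iff.mpr fun m hm => prod_ne_zero_iff.mpr fun n hn =>
      hcden a b hab m n (mem_range.mp hm) (mem_range.mp hn)
  -- block values
  have hdiagval : ∀ a : Fin ℓ, Pw (q : ℂ) (w a) (lam a) / Qw (q : ℂ) (w a) (lam a)
      = (-1 : ℂ) ^ (lam a - 1) * (1 - (q:ℂ)) ^ (lam a) * (w a) ^ (lam a - 1) /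
        (1 - (q : ℂ) ^ (lam a)) := by
    intro a
    obtain ⟨K, hK⟩ : ∃ K, lam a = K + 1 := ⟨lam a - 1, (Nat.succ_pred_eq_of_pos (hpos a)).symm⟩
    have hQ := hQwne a
    rw [hK] at hQ ⊢
    simp only [Nat.add_sub_cancel]
    rw [div_eq_div_iff hQ (h1mq (K+1) (Nat.succ_pos K))]
    linear_combination within_string (q:ℂ) (w a) K
  have hcrossval : ∀ a b : Fin ℓ, a ≠ b →
      (∏ m ∈ range (lam a), ∏ n ∈ range (lam b),
          ((q:ℂ) ^ m * w a - (q:ℂ) ^ n * w b)) /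
        (∏ m ∈ range (lam a), ∏ n ∈ range (lam b),
          ((q:ℂ) ^ m * w a - (q:ℂ) ^ (n+1) * w b))
      = (∏ m ∈ range (lam a), ((q:ℂ) ^ m * w a - w b)) /
        (∏ m ∈ range (lam a), ((q:ℂ) ^ m * w a - (q:ℂ) ^ (lam b) * w b)) := by
    intro a b hab
    rw [← prod_div_distrib, ← prod_div_distrib]
    refine prod_congr rfl fun m hm => ?_
    rw [← prod_div_distrib]
    obtain ⟨Kb, hKb⟩ : ∃ Kb, lam b = Kb + 1 := ⟨lam b - 1, (Nat.succ_pred_eq_of_pos (hpos b)).symm⟩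
    rw [hKb]
    have htel := myprod_telescope_div (fun n => (q:ℂ) ^ m * w a - (q:ℂ) ^ n * w b) Kb
      (fun n h1 h2 => by
        have h3 := hcden a b hab m (n-1) (mem_range.mp hm) (by omega)
        have h4 : n - 1 + 1 = n := by omega
        rwa [h4] at h3)
    rw [htel]
    norm_num
  -- the LHS as a double product of block ratios
  have hLHS : (∏ i : Fin k, ∏ j : Fin k, if i ≠ j then y i - y j else 1) /
      (∏ i : Fin k, ∏ j : Fin k,
        if i ≠ j ∧ ¬ ConsecPair lam i j then y i - (q : ℂ) * y j else 1)
      = ∏ a : Fin ℓ, ∏ b : Fin ℓ,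
          (if a = b then
            (-1 : ℂ) ^ (lam a - 1) * (1 - (q:ℂ)) ^ (lam a) * (w a) ^ (lam a - 1) /
              (1 - (q : ℂ) ^ (lam a))
          else (∏ m ∈ range (lam a), ((q:ℂ) ^ m * w a - w b)) /
            (∏ m ∈ range (lam a), ((q:ℂ) ^ m * w a - (q:ℂ) ^ (lam b) * w b))) := by
    rw [hN, hD, ← prod_div_distrib]
    refine prod_congr rfl fun a _ => ?_
    rw [← prod_div_distrib]
    refine prod_congr rfl fun b _ => ?_
    by_cases hab : a = b
    · subst hab
      rw [if_pos rfl, if_pos rfl, if_pos rfl]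
      exact hdiagval a
    · rw [if_neg hab, if_neg hab, if_neg hab]
      exact hcrossval a b hab
  -- split into the diagonal part and the paired off-diagonal part
  have hstep2 : (∏ a : Fin ℓ, ∏ b : Fin ℓ,
        (if a = b then
          (-1 : ℂ) ^ (lam a - 1) * (1 - (q:ℂ)) ^ (lam a) * (w a) ^ (lam a - 1) /
            (1 - (q : ℂ) ^ (lam a))
        else (∏ m ∈ range (lam a), ((q:ℂ) ^ m * w a - w b)) /
          (∏ m ∈ range (lam a), ((q:ℂ) ^ m * w a - (q:ℂ) ^ (lam b) * w b))))
      = (∏ a : Fin ℓ, (-1 : ℂ) ^ (lam a - 1) * (1 - (q:ℂ)) ^ (lam a) * (w a) ^ (lam a - 1) /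
            (1 - (q : ℂ) ^ (lam a))) *
        ∏ a : Fin ℓ, ∏ b : Fin ℓ,
          (if a < b then
            ((∏ m ∈ range (lam a), ((q:ℂ) ^ m * w a - w b)) /
              (∏ m ∈ range (lam a), ((q:ℂ) ^ m * w a - (q:ℂ) ^ (lam b) * w b))) *
            ((∏ m ∈ range (lam b), ((q:ℂ) ^ m * w b - w a)) /
              (∏ m ∈ range (lam b), ((q:ℂ) ^ m * w b - (q:ℂ) ^ (lam a) * w a)))
          else 1) := by
    rw [myprod_split_diag]
    congr 1
    · exact prod_congr rfl fun a _ => if_pos rfl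
    · rw [prod_congr rfl fun a _ => prod_congr rfl fun b _ =>
        show (if a ≠ b then (if a = b then
              (-1 : ℂ) ^ (lam a - 1) * (1 - (q:ℂ)) ^ (lam a) * (w a) ^ (lam a - 1) /
                (1 - (q : ℂ) ^ (lam a))
            else (∏ m ∈ range (lam a), ((q:ℂ) ^ m * w a - w b)) /
              (∏ m ∈ range (lam a), ((q:ℂ) ^ m * w a - (q:ℂ) ^ (lam b) * w b))) else 1)
          = (if a ≠ b then ((∏ m ∈ range (lam a), ((q:ℂ) ^ m * w a - w b)) /
              (∏ m ∈ range (lam a), ((q:ℂ) ^ m * w a - (q:ℂ) ^ (lam b) * w b))) else 1) from by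
          by_cases hab : a = b <;> simp [hab]]
      exact myprod_offdiag_pair (fun a b => (∏ m ∈ range (lam a), ((q:ℂ) ^ m * w a - w b)) /
        (∏ m ∈ range (lam a), ((q:ℂ) ^ m * w a - (q:ℂ) ^ (lam b) * w b)))
  -- evaluate each pair of opposite cross blocks
  have hT2ne : ∀ a b : Fin ℓ, a ≠ b →
      (∏ m ∈ range (lam a), ((q:ℂ) ^ m * w a - (q:ℂ) ^ (lam b) * w b)) ≠ 0 := by
    intro a b hab
    refine prod_ne_zero_iff.mpr fun m hm => ?_
    have h3 := hcden a b hab m (lam b - 1) (mem_range.mp hm) (by have := hpos b; omega)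
    have h4 : lam b - 1 + 1 = lam b := by have := hpos b; omega
    rwa [h4] at h3
  have hpairval : ∀ a b : Fin ℓ, a ≠ b →
      ((∏ m ∈ range (lam a), ((q:ℂ) ^ m * w a - w b)) /
        (∏ m ∈ range (lam a), ((q:ℂ) ^ m * w a - (q:ℂ) ^ (lam b) * w b))) *
      ((∏ m ∈ range (lam b), ((q:ℂ) ^ m * w b - w a)) /
        (∏ m ∈ range (lam b), ((q:ℂ) ^ m * w b - (q:ℂ) ^ (lam a) * w a)))
      = ((w b - w a) * (w a * (q:ℂ) ^ (lam a) - w b * (q:ℂ) ^ (lam b))) /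
        ((w a * (q:ℂ) ^ (lam a) - w b) * (w b * (q:ℂ) ^ (lam b) - w a) *
          (q:ℂ) ^ (lam a * lam b)) := by
    intro a b hab
    rw [div_mul_div_comm, div_eq_div_iff (mul_ne_zero (hT2ne a b hab) (hT2ne b a hab.symm))
      (mul_ne_zero (mul_ne_zero (hden' a b) (hden' b a)) (pow_ne_zero _ hqC))]
    linear_combination crossEq (q:ℂ) (w a) (w b) (lam a) (lam b)
  -- the natural-number exponent bookkeeping
  have hk2 : k ^ 2 = (∑ a, (lam a) * (lam a)) +
      2 * (∑ a : Fin ℓ, ∑ b : Fin ℓ, if a < b then lam a * lam b else 0) := by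
    have e0 : k ^ 2 = ∑ a : Fin ℓ, ∑ b : Fin ℓ, lam a * lam b := by
      rw [← hsum, sq, Finset.sum_mul_sum]
    have e1 := mysum_split_diag (fun a b : Fin ℓ => lam a * lam b)
    have e2 := mysum_offdiag_pair (fun a b : Fin ℓ => lam a * lam b)
    have e3 : (∑ a : Fin ℓ, ∑ b : Fin ℓ, if a < b then lam a * lam b + lam b * lam a else 0)
        = 2 * (∑ a : Fin ℓ, ∑ b : Fin ℓ, if a < b then lam a * lam b else 0) := by
      rw [Finset.mul_sum]
      refine Finset.sum_congr rfl fun a _ => ?_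
      rw [Finset.mul_sum]
      refine Finset.sum_congr rfl fun b _ => ?_
      by_cases h : a < b
      · simp only [if_pos h]; ring
      · simp [h]
    omega
  have hrp : ((q ^ (-(k : ℝ) ^ 2 / 2) : ℝ) : ℂ) *
      (∏ a : Fin ℓ, ((q ^ ((lam a : ℝ) ^ 2 / 2) : ℝ) : ℂ)) *
      (q : ℂ) ^ (∑ a : Fin ℓ, ∑ b : Fin ℓ, if a < b then lam a * lam b else 0) = 1 := by
    set Nq := ∑ a : Fin ℓ, ∑ b : Fin ℓ, if a < b then lam a * lam b else 0 with hNq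
    rw [← Complex.ofReal_prod, show ((q:ℂ)) ^ Nq = (((q ^ Nq : ℝ)) : ℂ) by push_cast; rfl,
      ← Complex.ofReal_mul, ← Complex.ofReal_mul]
    rw [show ((1:ℂ)) = ((1:ℝ):ℂ) by norm_num]
    congr 1
    rw [myrpow_sum q hq0, ← Real.rpow_natCast q Nq, ← Real.rpow_add hq0, ← Real.rpow_add hq0]
    rw [show (-(k:ℝ)^2/2 + ∑ a : Fin ℓ, ((lam a:ℝ)^2/2)) + (Nq:ℝ) = 0 from ?_, Real.rpow_zero]
    have hcast : (k:ℝ)^2 = (∑ a : Fin ℓ, (lam a : ℝ)^2) + 2*(Nq:ℝ) := by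
      have : ((k^2 : ℕ) : ℝ) = (((∑ a, (lam a) * (lam a)) +
          2 * Nq : ℕ) : ℝ) := by exact_mod_cast congrArg (Nat.cast (R := ℝ)) hk2
      push_cast at this
      rw [this]
      congr 1
      exact Finset.sum_congr rfl fun a _ => by ring
    have hhalf : ∑ a : Fin ℓ, ((lam a:ℝ)^2/2) = (∑ a : Fin ℓ, (lam a : ℝ)^2)/2 := by
      rw [Finset.sum_div]
    rw [hhalf]
    linarith
  -- the power-of-q product over pairs
  have hPQ : (∏ a : Fin ℓ, ∏ b : Fin ℓ, if a < b then (q:ℂ) ^ (lam a * lam b) else 1)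
      = (q:ℂ) ^ (∑ a : Fin ℓ, ∑ b : Fin ℓ, if a < b then lam a * lam b else 0) := by
    rw [prod_congr rfl fun a _ => prod_congr rfl fun b _ =>
      show (if a < b then (q:ℂ) ^ (lam a * lam b) else 1)
        = (q:ℂ) ^ (if a < b then lam a * lam b else 0) from by
      by_cases h : a < b <;> simp [h]]
    rw [prod_congr rfl fun a _ => Finset.prod_pow_eq_pow_sum Finset.univ _ _]
    exact Finset.prod_pow_eq_pow_sum Finset.univ _ _
  -- split the paired cross product into numerator / denominator / q-powers
  have hinner : ∀ a : Fin ℓ,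
      (∏ b : Fin ℓ, (if a < b then
        ((w b - w a) * (w a * (q:ℂ) ^ (lam a) - w b * (q:ℂ) ^ (lam b))) /
          ((w a * (q:ℂ) ^ (lam a) - w b) * (w b * (q:ℂ) ^ (lam b) - w a) *
            (q:ℂ) ^ (lam a * lam b)) else 1))
      = (∏ b : Fin ℓ, (if a < b then
          (w b - w a) * (w a * (q:ℂ) ^ (lam a) - w b * (q:ℂ) ^ (lam b)) else 1)) /
        ((∏ b : Fin ℓ, (if a < b then
          (w a * (q:ℂ) ^ (lam a) - w b) * (w b * (q:ℂ) ^ (lam b) - w a) else 1)) *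
         (∏ b : Fin ℓ, (if a < b then (q:ℂ) ^ (lam a * lam b) else 1))) := by
    intro a
    rw [← prod_mul_distrib, ← prod_div_distrib]
    refine prod_congr rfl fun b _ => ?_
    by_cases h : a < b
    · simp only [if_pos h]
    · simp [h]
  have hsplitpair : (∏ a : Fin ℓ, ∏ b : Fin ℓ, (if a < b then
        ((w b - w a) * (w a * (q:ℂ) ^ (lam a) - w b * (q:ℂ) ^ (lam b))) /
          ((w a * (q:ℂ) ^ (lam a) - w b) * (w b * (q:ℂ) ^ (lam b) - w a) *
            (q:ℂ) ^ (lam a * lam b)) else 1))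
      = (∏ a : Fin ℓ, ∏ b : Fin ℓ, (if a < b then
          (w b - w a) * (w a * (q:ℂ) ^ (lam a) - w b * (q:ℂ) ^ (lam b)) else 1)) /
        ((∏ a : Fin ℓ, ∏ b : Fin ℓ, (if a < b then
          (w a * (q:ℂ) ^ (lam a) - w b) * (w b * (q:ℂ) ^ (lam b) - w a) else 1)) *
         ((q:ℂ) ^ (∑ a : Fin ℓ, ∑ b : Fin ℓ, if a < b then lam a * lam b else 0))) := by
    rw [prod_congr rfl fun a _ => hinner a, ← hPQ, ← prod_mul_distrib, ← prod_div_distrib]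
  -- the full denominator product split
  have hPDen : (∏ i : Fin ℓ, ∏ j : Fin ℓ, (w i * (q : ℂ) ^ lam i - w j))
      = (∏ a : Fin ℓ, (w a * (q:ℂ) ^ lam a - w a)) *
        (∏ a : Fin ℓ, ∏ b : Fin ℓ, (if a < b then
          (w a * (q:ℂ) ^ (lam a) - w b) * (w b * (q:ℂ) ^ (lam b) - w a) else 1)) := by
    rw [myprod_split_diag (fun i j => w i * (q:ℂ) ^ lam i - w j), myprod_offdiag_pair]
  -- nonvanishing
  have hPDne : (∏ a : Fin ℓ, ∏ b : Fin ℓ, (if a < b then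
      (w a * (q:ℂ) ^ (lam a) - w b) * (w b * (q:ℂ) ^ (lam b) - w a) else 1)) ≠ 0 := by
    refine prod_ne_zero_iff.mpr fun a _ => prod_ne_zero_iff.mpr fun b _ => ?_
    by_cases h : a < b
    · rw [if_pos h]; exact mul_ne_zero (hden' a b) (hden' b a)
    · rw [if_neg h]; exact one_ne_zero
  have hDgne : (∏ a : Fin ℓ, (w a * (q:ℂ) ^ lam a - w a)) ≠ 0 :=
    prod_ne_zero_iff.mpr fun a _ => hden' a a
  have hPQne : ((q:ℂ) ^ (∑ a : Fin ℓ, ∑ b : Fin ℓ, if a < b then lam a * lam b else 0)) ≠ 0 :=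
    pow_ne_zero _ hqC
  -- the scalar identity
  have hDD : (∏ a : Fin ℓ, (-1 : ℂ) ^ (lam a - 1) * (1 - (q:ℂ)) ^ (lam a) * (w a) ^ (lam a - 1) /
        (1 - (q : ℂ) ^ (lam a))) * (∏ a : Fin ℓ, (w a * (q:ℂ) ^ lam a - w a))
      = ∏ a : Fin ℓ, ((-1:ℂ) ^ (lam a) * (1 - (q:ℂ)) ^ (lam a) * (w a) ^ (lam a)) := by
    rw [← prod_mul_distrib]
    refine prod_congr rfl fun a _ => ?_
    obtain ⟨K, hK⟩ : ∃ K, lam a = K + 1 := ⟨lam a - 1, (Nat.succ_pred_eq_of_pos (hpos a)).symm⟩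
    rw [hK]
    simp only [Nat.add_sub_cancel]
    rw [div_mul_eq_mul_div, div_eq_iff (h1mq (K+1) (Nat.succ_pos K))]
    ring
  have hEE : (∏ a : Fin ℓ, ((-1:ℂ) ^ (lam a) * (1 - (q:ℂ)) ^ (lam a) * (w a) ^ (lam a)))
      = (-1:ℂ) ^ k * (1 - (q:ℂ)) ^ k * ∏ a : Fin ℓ, (w a) ^ (lam a) := by
    rw [prod_mul_distrib, prod_mul_distrib, Finset.prod_pow_eq_pow_sum,
      Finset.prod_pow_eq_pow_sum, hsum]
  have hscal : (∏ a : Fin ℓ, (-1 : ℂ) ^ (lam a - 1) * (1 - (q:ℂ)) ^ (lam a) * (w a) ^ (lam a - 1) /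
        (1 - (q : ℂ) ^ (lam a))) * (∏ a : Fin ℓ, (w a * (q:ℂ) ^ lam a - w a))
      = (-1 : ℂ) ^ k * ((1 - q : ℝ) : ℂ) ^ k * ((q ^ (-(k : ℝ) ^ 2 / 2) : ℝ) : ℂ) *
        (∏ j : Fin ℓ, w j ^ lam j * ((q ^ ((lam j : ℝ) ^ 2 / 2) : ℝ) : ℂ)) *
        ((q:ℂ) ^ (∑ a : Fin ℓ, ∑ b : Fin ℓ, if a < b then lam a * lam b else 0)) := by
    rw [hDD, hEE, prod_mul_distrib,
      show ((1 - q : ℝ) : ℂ) = 1 - (q:ℂ) from by push_cast; ring]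
    linear_combination (-((-1:ℂ) ^ k * (1 - (q:ℂ)) ^ k * ∏ a : Fin ℓ, (w a) ^ (lam a))) * hrp
  -- main equation
  have hmain : (∏ i : Fin k, ∏ j : Fin k, if i ≠ j then y i - y j else 1) /
      (∏ i : Fin k, ∏ j : Fin k,
        if i ≠ j ∧ ¬ ConsecPair lam i j then y i - (q : ℂ) * y j else 1)
    = (-1 : ℂ) ^ k * ((1 - q : ℝ) : ℂ) ^ k * ((q ^ (-(k : ℝ) ^ 2 / 2) : ℝ) : ℂ) *
        (∏ j : Fin ℓ, w j ^ lam j * ((q ^ ((lam j : ℝ) ^ 2 / 2) : ℝ) : ℂ)) *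
        ((∏ i : Fin ℓ, ∏ j : Fin ℓ,
            if i < j then (w j - w i) * (w i * (q : ℂ) ^ lam i - w j * (q : ℂ) ^ lam j)
            else 1) /
          (∏ i : Fin ℓ, ∏ j : Fin ℓ, (w i * (q : ℂ) ^ lam i - w j))) := by
    rw [hLHS, hstep2,
      prod_congr rfl fun a _ => prod_congr rfl fun b _ =>
        show _ = (if a < b then
          ((w b - w a) * (w a * (q:ℂ) ^ (lam a) - w b * (q:ℂ) ^ (lam b))) /
            ((w a * (q:ℂ) ^ (lam a) - w b) * (w b * (q:ℂ) ^ (lam b) - w a) *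
              (q:ℂ) ^ (lam a * lam b)) else 1) from by
        by_cases h : a < b
        · rw [if_pos h, if_pos h]; exact hpairval a b h.ne
        · rw [if_neg h, if_neg h],
      hsplitpair, hPDen]
    rw [← mul_div_assoc, ← mul_div_assoc,
      div_eq_div_iff (mul_ne_zero hPDne hPQne) (mul_ne_zero hDgne hPDne)]
    linear_combination ((∏ a : Fin ℓ, ∏ b : Fin ℓ, (if a < b then
        (w b - w a) * (w a * (q:ℂ) ^ (lam a) - w b * (q:ℂ) ^ (lam b)) else 1)) *
      (∏ a : Fin ℓ, ∏ b : Fin ℓ, (if a < b then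
        (w a * (q:ℂ) ^ (lam a) - w b) * (w b * (q:ℂ) ^ (lam b) - w a) else 1))) * hscal
  refine ⟨hmain, hmain.trans ?_⟩
  have hcd : Matrix.det (Matrix.of fun i j : Fin ℓ => 1 / (w i * (q : ℂ) ^ lam i - w j))
      = (∏ i : Fin ℓ, ∏ j : Fin ℓ,
          if i < j then (w j - w i) * (w i * (q : ℂ) ^ lam i - w j * (q : ℂ) ^ lam j) else 1) /
        (∏ i : Fin ℓ, ∏ j : Fin ℓ, (w i * (q : ℂ) ^ lam i - w j)) :=
    my_cauchy_det (fun i => w i * (q:ℂ) ^ lam i) w hden'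
  rw [hcd]
end

section
/- Fix k ≥ 1, q ∈ (0,1), a partition λ ⊢ k of length ℓ, and complex numbers w_1,…,w_ℓ such that every denominator below is nonzero at the substitution. Let y_1,…,y_k be given by the q-string substitution y_{s_j+m} = q^{m−1}·w_j. Then the value of ∏_{1≤i<j≤k} (1 − y_i y_j)² / [(q − y_i y_j)(1 − q·y_i y_j)] at this substitution equals q^{−k²/2}·q^{k/2} ∏_{j=1}^{ℓ} [(1 − q^{λ_j}·w_j²/q)/(1 − w_j²/q)] · [(w_j²/q; q²)_{λ_j} / (w_j²; q²)_{λ_j}] · ∏_{1≤i<j≤ℓ} [(1 − q^{λ_i}·w_i w_j/q)(1 − q^{λ_j}·w_i w_j/q)] / [(1 − w_i w_j/q)(1 − q^{λ_i+λ_j}·w_i w_j/q)]. -/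
/-- The `q`-Pochhammer symbol `(a; t)_n = (1−a)(1−ta)⋯(1−t^{n−1}a)`. -/
noncomputable def qPoch (a t : ℂ) (n : ℕ) : ℂ :=
  ∏ i ∈ Finset.range n, (1 - t ^ i * a)

open Finset

section Telescope

variable {R : Type*} [CommRing R]

theorem sq_prod_mul_eq_row (e : ℕ → R) (A b : ℕ) :
    (∏ a ∈ range A, e (a + b + 1)) ^ 2 * (e b * e (A + b + 1)) =
      e (b + 1) * e (A + b) * ∏ a ∈ range A, (e (a + b) * e (a + b + 2)) := by
  induction A with
  | zero => simp [mul_comm]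
  | succ A ih =>
    rw [prod_range_succ, prod_range_succ, Nat.add_right_comm A 1 b]
    linear_combination (e (A + b + 1) * e (A + b + 2)) * ih

theorem sq_prod_mul_eq_rect_of_ne_zero [IsDomain R] (e : ℕ → R) (he : ∀ s, e s ≠ 0) (A B : ℕ) :
    (∏ b ∈ range B, ∏ a ∈ range A, e (a + b + 1)) ^ 2 * (e 0 * e (A + B)) =
      e A * e B * ∏ b ∈ range B, ∏ a ∈ range A, (e (a + b) * e (a + b + 2)) := by
  induction B with
  | zero => simp [mul_comm]
  | succ B ih =>
    refine mul_right_cancel₀ (mul_ne_zero (he B) (he (A + B))) ?_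
    rw [prod_range_succ, prod_range_succ, ← add_assoc]
    linear_combination ((∏ a ∈ range A, e (a + B + 1)) ^ 2 * (e B * e (A + B + 1))) * ih
      + (e A * e B * ∏ b ∈ range B, ∏ a ∈ range A, (e (a + b) * e (a + b + 2))) *
        sq_prod_mul_eq_row e A B

theorem sq_prod_mul_eq_triangle_of_ne_zero [IsDomain R] (e : ℕ → R) (he : ∀ s, e s ≠ 0) (n : ℕ) :
    (∏ b ∈ range n, ∏ a ∈ range b, e (a + b + 1)) ^ 2 * (e 0 * ∏ i ∈ range n, e (2 * i + 1)) =
      e n * (∏ i ∈ range n, e (2 * i)) *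
        ∏ b ∈ range n, ∏ a ∈ range b, (e (a + b) * e (a + b + 2)) := by
  induction n with
  | zero => simp
  | succ n ih =>
    refine mul_right_cancel₀ (he n) ?_
    rw [prod_range_succ, prod_range_succ, prod_range_succ, prod_range_succ, two_mul]
    linear_combination ((∏ a ∈ range n, e (a + n + 1)) ^ 2 * (e n * e (n + n + 1))) * ih
      + (e n * (∏ i ∈ range n, e (2 * i)) *
          ∏ b ∈ range n, ∏ a ∈ range b, (e (a + b) * e (a + b + 2))) * sq_prod_mul_eq_row e n n

/- Both sides are monomials in the `e s`, so it is enough to compare them for the variables of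
`MvPolynomial ℕ ℤ`, a domain in which they are nonzero and can be cancelled. -/
theorem sq_prod_mul_eq_rect (e : ℕ → R) (A B : ℕ) :
    (∏ b ∈ range B, ∏ a ∈ range A, e (a + b + 1)) ^ 2 * (e 0 * e (A + B)) =
      e A * e B * ∏ b ∈ range B, ∏ a ∈ range A, (e (a + b) * e (a + b + 2)) := by
  simpa [map_prod] using congrArg (MvPolynomial.aeval e)
    (sq_prod_mul_eq_rect_of_ne_zero (R := MvPolynomial ℕ ℤ) _ MvPolynomial.X_ne_zero A B)

theorem sq_prod_mul_eq_triangle (e : ℕ → R) (n : ℕ) :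
    (∏ b ∈ range n, ∏ a ∈ range b, e (a + b + 1)) ^ 2 * (e 0 * ∏ i ∈ range n, e (2 * i + 1)) =
      e n * (∏ i ∈ range n, e (2 * i)) *
        ∏ b ∈ range n, ∏ a ∈ range b, (e (a + b) * e (a + b + 2)) := by
  simpa [map_prod] using congrArg (MvPolynomial.aeval e)
    (sq_prod_mul_eq_triangle_of_ne_zero (R := MvPolynomial ℕ ℤ) _ MvPolynomial.X_ne_zero n)

end Telescope

section TelescopeField

variable {K : Type*} [Field K]

theorem prod_prod_div_rect (f : ℕ → K) (A B : ℕ)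
    (hf : ∀ b < B, ∀ a < A, f (a + b) ≠ 0 ∧ f (a + b + 2) ≠ 0) (h0 : f 0 ≠ 0)
    (hAB : f (A + B) ≠ 0) :
    ∏ b ∈ range B, ∏ a ∈ range A, f (a + b + 1) ^ 2 / (f (a + b) * f (a + b + 2)) =
      f A * f B / (f 0 * f (A + B)) := by
  have hden : ∏ b ∈ range B, ∏ a ∈ range A, (f (a + b) * f (a + b + 2)) ≠ 0 :=
    prod_ne_zero_iff.2 fun b hb => prod_ne_zero_iff.2 fun a ha =>
      mul_ne_zero_iff.2 (hf b (mem_range.1 hb) a (mem_range.1 ha))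
  simp only [prod_div_distrib, prod_pow]
  rw [div_eq_div_iff hden (mul_ne_zero h0 hAB)]
  linear_combination sq_prod_mul_eq_rect f A B

theorem prod_prod_div_triangle (f : ℕ → K) (n : ℕ)
    (hf : ∀ b < n, ∀ a < b, f (a + b) ≠ 0 ∧ f (a + b + 2) ≠ 0) (h0 : f 0 ≠ 0)
    (hodd : ∏ i ∈ range n, f (2 * i + 1) ≠ 0) :
    ∏ b ∈ range n, ∏ a ∈ range b, f (a + b + 1) ^ 2 / (f (a + b) * f (a + b + 2)) =
      f n * (∏ i ∈ range n, f (2 * i)) / (f 0 * ∏ i ∈ range n, f (2 * i + 1)) := by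
  have hden : ∏ b ∈ range n, ∏ a ∈ range b, (f (a + b) * f (a + b + 2)) ≠ 0 :=
    prod_ne_zero_iff.2 fun b hb => prod_ne_zero_iff.2 fun a ha =>
      mul_ne_zero_iff.2 (hf b (mem_range.1 hb) a (mem_range.1 ha))
  simp only [prod_div_distrib, prod_pow]
  rw [div_eq_div_iff hden (mul_ne_zero h0 hodd)]
  linear_combination sq_prod_mul_eq_triangle f n

end TelescopeField

section FinProducts

variable {M : Type*} [CommMonoid M]

theorem prod_fin_prod_fin_eq_prod_range (g : ℕ → ℕ → M) (A B : ℕ) :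
    ∏ a : Fin A, ∏ b : Fin B, g a b = ∏ b ∈ range B, ∏ a ∈ range A, g a b := by
  rw [prod_comm, Fin.prod_univ_eq_prod_range (fun b => ∏ a : Fin A, g a b)]
  exact prod_congr rfl fun b _ => Fin.prod_univ_eq_prod_range (g · b) A

theorem prod_fin_prod_fin_ite_lt_eq_prod_range (g : ℕ → ℕ → M) (n : ℕ) :
    ∏ a : Fin n, ∏ b : Fin n, (if a < b then g a b else 1) =
      ∏ b ∈ range n, ∏ a ∈ range b, g a b := by
  simp only [Fin.lt_def]
  rw [prod_fin_prod_fin_eq_prod_range (fun a b => if a < b then g a b else 1)]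
  refine prod_congr rfl fun b hb => ?_
  rw [← prod_filter]
  congr 1
  ext a
  simp only [mem_filter, mem_range]
  have := mem_range.1 hb
  omega

end FinProducts

section BlockFactors

variable {K : Type*} [Field K]

theorem one_sub_sq_div_eq_inv_mul {q : K} (hq : q ≠ 0) (x : K) :
    (1 - x) ^ 2 / ((q - x) * (1 - q * x)) = q⁻¹ * ((1 - x) ^ 2 / ((1 - x / q) * (1 - q * x))) := by
  rw [show q - x = q * (1 - x / q) by field_simp, mul_assoc, ← div_div, div_right_comm,
    div_eq_inv_mul]

theorem pow_mul_mul_pow_mul {q : K} (hq : q ≠ 0) (u v : K) (a b : ℕ) :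
    q ^ a * u * (q ^ b * v) = q ^ (a + b + 1) * (u * v / q) := by
  rw [pow_succ, pow_add]
  field_simp

theorem qString_factor_eq {q : K} (hq : q ≠ 0) (u v : K) (a b : ℕ) :
    (1 - q ^ a * u * (q ^ b * v)) ^ 2 /
        ((1 - q ^ a * u * (q ^ b * v) / q) * (1 - q * (q ^ a * u * (q ^ b * v)))) =
      (1 - q ^ (a + b + 1) * (u * v / q)) ^ 2 /
        ((1 - q ^ (a + b) * (u * v / q)) * (1 - q ^ (a + b + 2) * (u * v / q))) := by
  have hdiv : q ^ (a + b + 1) * (u * v / q) / q = q ^ (a + b) * (u * v / q) := by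
    rw [pow_succ]; field_simp
  have hmul : q * (q ^ (a + b + 1) * (u * v / q)) = q ^ (a + b + 2) * (u * v / q) := by ring
  rw [pow_mul_mul_pow_mul hq, hdiv, hmul]

theorem qString_den_ne_zero {q : K} (hq : q ≠ 0) (u v : K) (a b : ℕ)
    (h : q - q ^ a * u * (q ^ b * v) ≠ 0 ∧ 1 - q * (q ^ a * u * (q ^ b * v)) ≠ 0) :
    1 - q ^ (a + b) * (u * v / q) ≠ 0 ∧ 1 - q ^ (a + b + 2) * (u * v / q) ≠ 0 := by
  rw [pow_mul_mul_pow_mul hq] at h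
  refine ⟨fun h0 => h.1 ?_, ?_⟩
  · rw [show q - q ^ (a + b + 1) * (u * v / q) = q * (1 - q ^ (a + b) * (u * v / q)) by ring, h0,
      mul_zero]
  · convert h.2 using 2
    ring

theorem prod_qString_rect {q : K} (hq : q ≠ 0) (u v : K) (A B : ℕ)
    (hden : ∀ (a : Fin A) (b : Fin B), q - q ^ (a : ℕ) * u * (q ^ (b : ℕ) * v) ≠ 0 ∧
      1 - q * (q ^ (a : ℕ) * u * (q ^ (b : ℕ) * v)) ≠ 0)
    (h0 : 1 - u * v / q ≠ 0) (hAB : 1 - q ^ (A + B) * (u * v / q) ≠ 0) :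
    ∏ a : Fin A, ∏ b : Fin B, (1 - q ^ (a : ℕ) * u * (q ^ (b : ℕ) * v)) ^ 2 /
        ((1 - q ^ (a : ℕ) * u * (q ^ (b : ℕ) * v) / q) *
          (1 - q * (q ^ (a : ℕ) * u * (q ^ (b : ℕ) * v)))) =
      (1 - q ^ A * (u * v / q)) * (1 - q ^ B * (u * v / q)) /
        ((1 - u * v / q) * (1 - q ^ (A + B) * (u * v / q))) := by
  have key := prod_prod_div_rect (fun s => 1 - q ^ s * (u * v / q)) A B
    (fun b hb a ha => qString_den_ne_zero hq u v a b (hden ⟨a, ha⟩ ⟨b, hb⟩))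
    (by rwa [pow_zero, one_mul]) hAB
  rw [pow_zero, one_mul] at key
  rw [← key, ← prod_fin_prod_fin_eq_prod_range]
  simp only [qString_factor_eq hq]

end BlockFactors

theorem prod_qString_triangle {q : ℂ} (hq : q ≠ 0) (w : ℂ) (n : ℕ)
    (hden : ∀ a b : Fin n, a < b → q - q ^ (a : ℕ) * w * (q ^ (b : ℕ) * w) ≠ 0 ∧
      1 - q * (q ^ (a : ℕ) * w * (q ^ (b : ℕ) * w)) ≠ 0)
    (h0 : 1 - w ^ 2 / q ≠ 0) (hodd : qPoch (w ^ 2) (q ^ 2) n ≠ 0) :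
    ∏ a : Fin n, ∏ b : Fin n, (if a < b then (1 - q ^ (a : ℕ) * w * (q ^ (b : ℕ) * w)) ^ 2 /
        ((1 - q ^ (a : ℕ) * w * (q ^ (b : ℕ) * w) / q) *
          (1 - q * (q ^ (a : ℕ) * w * (q ^ (b : ℕ) * w)))) else 1) =
      (1 - q ^ n * (w ^ 2 / q)) / (1 - w ^ 2 / q) *
        (qPoch (w ^ 2 / q) (q ^ 2) n / qPoch (w ^ 2) (q ^ 2) n) := by
  have heven_eq : qPoch (w ^ 2 / q) (q ^ 2) n = ∏ i ∈ range n, (1 - q ^ (2 * i) * (w * w / q)) :=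
    prod_congr rfl fun i _ => by rw [pow_mul, sq w]
  have hodd_eq : qPoch (w ^ 2) (q ^ 2) n = ∏ i ∈ range n, (1 - q ^ (2 * i + 1) * (w * w / q)) :=
    prod_congr rfl fun i _ => by rw [pow_succ q (2 * i), pow_mul]; field_simp
  rw [hodd_eq] at hodd
  have key := prod_prod_div_triangle (fun s => 1 - q ^ s * (w * w / q)) n
    (fun b hb a ha => qString_den_ne_zero hq w w a b (hden ⟨a, ha.trans hb⟩ ⟨b, hb⟩ ha))
    (by rwa [pow_zero, one_mul, ← sq]) hodd
  rw [pow_zero, one_mul, ← heven_eq, ← hodd_eq, ← sq, mul_div_mul_comm] at key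
  rw [← key, ← prod_fin_prod_fin_ite_lt_eq_prod_range]
  simp only [qString_factor_eq hq, ← sq]

section Blocks

variable {ℓ : ℕ} (lam : Fin ℓ → ℕ)

theorem sPart_add_self (t : Fin ℓ) : sPart lam t + lam t = ∑ i ∈ univ.filter (· ≤ t), lam i := by
  rw [sPart, add_comm, ← sum_insert (by simp)]
  congr 1
  ext i
  simp [le_iff_lt_or_eq, or_comm]

theorem sPart_add_le_sum (t : Fin ℓ) : sPart lam t + lam t ≤ ∑ i, lam i := by
  rw [sPart_add_self]
  exact sum_le_sum_of_subset (filter_subset _ _)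

theorem sPart_add_lt_sPart_add {t₁ t₂ : Fin ℓ} (h : t₁ < t₂) {a : ℕ} (ha : a < lam t₁) (b : ℕ) :
    sPart lam t₁ + a < sPart lam t₂ + b := by
  have : sPart lam t₁ + lam t₁ ≤ sPart lam t₂ := by
    rw [sPart_add_self]
    exact sum_le_sum_of_subset fun i => by simpa using fun hi => hi.trans_lt h
  omega

theorem sPart_add_injective :
    Function.Injective fun p : Σ t, Fin (lam t) => sPart lam p.1 + (p.2 : ℕ) := by
  rintro ⟨t₁, a⟩ ⟨t₂, b⟩ h
  rcases lt_trichotomy t₁ t₂ with ht | rfl | ht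
  · exact absurd h (sPart_add_lt_sPart_add lam ht a.2 b).ne
  · simpa [Fin.ext_iff] using h
  · exact absurd h (sPart_add_lt_sPart_add lam ht b.2 a).ne'

noncomputable def sPartEquiv : (Σ t, Fin (lam t)) ≃ Fin (∑ t, lam t) :=
  Equiv.ofBijective (fun p => ⟨sPart lam p.1 + p.2, by have := sPart_add_le_sum lam p.1; omega⟩) <|
    (Fintype.bijective_iff_injective_and_card _).2
      ⟨fun _ _ h => sPart_add_injective lam (congrArg Fin.val h), by simp⟩

theorem sPartEquiv_apply (p : Σ t, Fin (lam t)) : (sPartEquiv lam p : ℕ) = sPart lam p.1 + p.2 :=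
  rfl

theorem sPartEquiv_lt_of_lt {t₁ t₂ : Fin ℓ} (h : t₁ < t₂) (a : Fin (lam t₁)) (b : Fin (lam t₂)) :
    sPartEquiv lam ⟨t₁, a⟩ < sPartEquiv lam ⟨t₂, b⟩ :=
  Fin.lt_def.2 (sPart_add_lt_sPart_add lam h a.2 b)

theorem sPartEquiv_lt_iff (t : Fin ℓ) (a b : Fin (lam t)) :
    sPartEquiv lam ⟨t, a⟩ < sPartEquiv lam ⟨t, b⟩ ↔ a < b := by
  rw [Fin.lt_def, Fin.lt_def, sPartEquiv_apply, sPartEquiv_apply]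
  exact Nat.add_lt_add_iff_left

theorem prod_prod_ite_lt_eq_blocks {M : Type*} [CommMonoid M]
    (G : Fin (∑ t, lam t) → Fin (∑ t, lam t) → M) :
    ∏ i, ∏ j, (if i < j then G i j else 1) =
      (∏ t, ∏ a : Fin (lam t), ∏ b : Fin (lam t),
        if a < b then G (sPartEquiv lam ⟨t, a⟩) (sPartEquiv lam ⟨t, b⟩) else 1) *
      ∏ t₁, ∏ t₂, if t₁ < t₂ then
        ∏ a : Fin (lam t₁), ∏ b : Fin (lam t₂), G (sPartEquiv lam ⟨t₁, a⟩) (sPartEquiv lam ⟨t₂, b⟩)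
      else 1 := by
  have hreindex : ∏ i, ∏ j, (if i < j then G i j else 1) =
      ∏ t₁, ∏ t₂, ∏ a : Fin (lam t₁), ∏ b : Fin (lam t₂),
        if sPartEquiv lam ⟨t₁, a⟩ < sPartEquiv lam ⟨t₂, b⟩ then
          G (sPartEquiv lam ⟨t₁, a⟩) (sPartEquiv lam ⟨t₂, b⟩) else 1 := by
    rw [← (sPartEquiv lam).prod_comp, Fintype.prod_sigma]
    refine prod_congr rfl fun t₁ _ => (prod_congr rfl fun a _ => ?_).trans prod_comm
    rw [← (sPartEquiv lam).prod_comp, Fintype.prod_sigma]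
  rw [hreindex, ← prod_mul_distrib]
  refine prod_congr rfl fun t₁ _ => ?_
  have hdiag : (∏ a : Fin (lam t₁), ∏ b : Fin (lam t₁),
      if a < b then G (sPartEquiv lam ⟨t₁, a⟩) (sPartEquiv lam ⟨t₁, b⟩) else 1) =
      ∏ t₂, if t₁ = t₂ then ∏ a : Fin (lam t₁), ∏ b : Fin (lam t₂),
        if (a : ℕ) < b then G (sPartEquiv lam ⟨t₁, a⟩) (sPartEquiv lam ⟨t₂, b⟩) else 1
      else 1 := by
    rw [Fintype.prod_ite_eq]
    rfl
  rw [hdiag, ← prod_mul_distrib]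
  refine prod_congr rfl fun t₂ _ => ?_
  rcases lt_trichotomy t₁ t₂ with h | rfl | h
  · simp [h, h.ne, sPartEquiv_lt_of_lt lam h]
  · simp only [sPartEquiv_lt_iff, lt_irrefl, if_true, if_false, mul_one]
    rfl
  · simp [h.ne', h.not_gt, (sPartEquiv_lt_of_lt lam h _ _).not_gt]

end Blocks

theorem prod_prod_ite_lt_const_mul {α M : Type*} [Fintype α] [LinearOrder α] [CommMonoid M]
    (c : M) (g : α → α → M) :
    ∏ i, ∏ j, (if i < j then c * g i j else 1) =
      c ^ (Fintype.card α).choose 2 * ∏ i, ∏ j, (if i < j then g i j else 1) := by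
  simp only [ite_mul_one, prod_mul_distrib]
  rw [← Fintype.prod_prod_type' (fun i j => if i < j then c else 1), ← prod_filter, prod_const,
    Fintype.card_product_filter_lt]

theorem ofReal_rpow_mul_rpow {q : ℝ} (hq : 0 < q) (k : ℕ) :
    ((q ^ (-(k : ℝ) ^ 2 / 2) : ℝ) : ℂ) * ((q ^ ((k : ℝ) / 2) : ℝ) : ℂ) =
      ((q : ℂ)⁻¹) ^ k.choose 2 := by
  rw [← Complex.ofReal_mul, ← Real.rpow_add hq,
    show -(k : ℝ) ^ 2 / 2 + k / 2 = -(k.choose 2 : ℕ) by rw [Nat.cast_choose_two]; ring,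
    Real.rpow_neg hq.le, Real.rpow_natCast]
  push_cast
  rw [inv_pow]

theorem q_string_substitution_typeBC_part_general
    (k : ℕ) (q : ℝ) (hq0 : 0 < q)
    (ℓ : ℕ) (lam : Fin ℓ → ℕ)
    (hsum : ∑ j, lam j = k)
    (w : Fin ℓ → ℂ)
    (y : Fin k → ℂ)
    (hy : ∀ (j : Fin ℓ) (m : ℕ), m < lam j → ∀ h : sPart lam j + m < k,
      y ⟨sPart lam j + m, h⟩ = (q : ℂ) ^ m * w j)
    (hden1 : ∀ i j : Fin k, i < j →
      (q : ℂ) - y i * y j ≠ 0 ∧ 1 - (q : ℂ) * (y i * y j) ≠ 0)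
    (hden2 : ∀ j : Fin ℓ, 1 - (w j) ^ 2 / (q : ℂ) ≠ 0)
    (hden3 : ∀ j : Fin ℓ, qPoch ((w j) ^ 2) ((q : ℂ) ^ 2) (lam j) ≠ 0)
    (hden4 : ∀ i j : Fin ℓ, i < j →
      1 - w i * w j / (q : ℂ) ≠ 0 ∧
      1 - (q : ℂ) ^ (lam i + lam j) * (w i * w j / (q : ℂ)) ≠ 0) :
    (∏ i : Fin k, ∏ j : Fin k,
      if i < j then
        (1 - y i * y j) ^ 2 / (((q : ℂ) - y i * y j) * (1 - (q : ℂ) * (y i * y j)))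
      else 1)
    = ((q ^ (-(k : ℝ) ^ 2 / 2) : ℝ) : ℂ) * ((q ^ ((k : ℝ) / 2) : ℝ) : ℂ) *
      (∏ j : Fin ℓ,
        ((1 - (q : ℂ) ^ lam j * ((w j) ^ 2 / (q : ℂ))) / (1 - (w j) ^ 2 / (q : ℂ))) *
          (qPoch ((w j) ^ 2 / (q : ℂ)) ((q : ℂ) ^ 2) (lam j) /
            qPoch ((w j) ^ 2) ((q : ℂ) ^ 2) (lam j))) *
      (∏ i : Fin ℓ, ∏ j : Fin ℓ,
        if i < j then
          ((1 - (q : ℂ) ^ lam i * (w i * w j / (q : ℂ))) *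
            (1 - (q : ℂ) ^ lam j * (w i * w j / (q : ℂ)))) /
          ((1 - w i * w j / (q : ℂ)) *
            (1 - (q : ℂ) ^ (lam i + lam j) * (w i * w j / (q : ℂ))))
        else 1) := by
  subst hsum
  have hq : (q : ℂ) ≠ 0 := Complex.ofReal_ne_zero.2 hq0.ne'
  have hye : ∀ t (a : Fin (lam t)), y (sPartEquiv lam ⟨t, a⟩) = (q : ℂ) ^ (a : ℕ) * w t :=
    fun t a => hy t a a.2 _
  simp only [one_sub_sq_div_eq_inv_mul hq, prod_prod_ite_lt_const_mul, Fintype.card_fin,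
    prod_prod_ite_lt_eq_blocks, hye]
  rw [ofReal_rpow_mul_rpow hq0, mul_assoc]
  congr 2
  · refine prod_congr rfl fun t _ => prod_qString_triangle hq (w t) (lam t) (fun a b hab => ?_)
      (hden2 t) (hden3 t)
    simpa only [hye] using hden1 _ _ ((sPartEquiv_lt_iff lam t a b).2 hab)
  · refine prod_congr rfl fun t₁ _ => prod_congr rfl fun t₂ _ => ?_
    split_ifs with h
    · refine prod_qString_rect hq (w t₁) (w t₂) (lam t₁) (lam t₂) (fun a b => ?_) (hden4 t₁ t₂ h).1
        (hden4 t₁ t₂ h).2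
      simpa only [hye] using hden1 _ _ (sPartEquiv_lt_of_lt lam h a b)
    · rfl

/-- Lemma 7.5: evaluation of the substitution `Sub^q_λ` of
`∏_{i<j} (1 − y_i y_j)² / ((q − y_i y_j)(1 − q y_i y_j))` along the `q`-strings of a
partition `λ ⊢ k`. -/
theorem q_string_substitution_typeBC_part
    (k : ℕ) (hk : 1 ≤ k) (q : ℝ) (hq0 : 0 < q) (hq1 : q < 1)
    (ℓ : ℕ) (lam : Fin ℓ → ℕ)
    (hpos : ∀ j, 0 < lam j) (hmono : ∀ i j : Fin ℓ, i ≤ j → lam j ≤ lam i)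
    (hsum : ∑ j, lam j = k)
    (w : Fin ℓ → ℂ)
    (y : Fin k → ℂ)
    (hy : ∀ (j : Fin ℓ) (m : ℕ), m < lam j → ∀ h : sPart lam j + m < k,
      y ⟨sPart lam j + m, h⟩ = (q : ℂ) ^ m * w j)
    (hden1 : ∀ i j : Fin k, i < j →
      (q : ℂ) - y i * y j ≠ 0 ∧ 1 - (q : ℂ) * (y i * y j) ≠ 0)
    (hden2 : ∀ j : Fin ℓ, 1 - (w j) ^ 2 / (q : ℂ) ≠ 0)
    (hden3 : ∀ j : Fin ℓ, qPoch ((w j) ^ 2) ((q : ℂ) ^ 2) (lam j) ≠ 0)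
    (hden4 : ∀ i j : Fin ℓ, i < j →
      1 - w i * w j / (q : ℂ) ≠ 0 ∧
      1 - (q : ℂ) ^ (lam i + lam j) * (w i * w j / (q : ℂ)) ≠ 0) :
    (∏ i : Fin k, ∏ j : Fin k,
      if i < j then
        (1 - y i * y j) ^ 2 / (((q : ℂ) - y i * y j) * (1 - (q : ℂ) * (y i * y j)))
      else 1)
    = ((q ^ (-(k : ℝ) ^ 2 / 2) : ℝ) : ℂ) * ((q ^ ((k : ℝ) / 2) : ℝ) : ℂ) *
      (∏ j : Fin ℓ,
        ((1 - (q : ℂ) ^ lam j * ((w j) ^ 2 / (q : ℂ))) / (1 - (w j) ^ 2 / (q : ℂ))) *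
          (qPoch ((w j) ^ 2 / (q : ℂ)) ((q : ℂ) ^ 2) (lam j) /
            qPoch ((w j) ^ 2) ((q : ℂ) ^ 2) (lam j))) *
      (∏ i : Fin ℓ, ∏ j : Fin ℓ,
        if i < j then
          ((1 - (q : ℂ) ^ lam i * (w i * w j / (q : ℂ))) *
            (1 - (q : ℂ) ^ lam j * (w i * w j / (q : ℂ)))) /
          ((1 - w i * w j / (q : ℂ)) *
            (1 - (q : ℂ) ^ (lam i + lam j) * (w i * w j / (q : ℂ))))
        else 1) :=
  q_string_substitution_typeBC_part_general k q hq0 ℓ lam hsum w y hy hden1 hden2 hden3 hden4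
end

section
/- For every integer k ≥ 1, every c ∈ ℂ, and all pairwise distinct complex numbers z_1,…,z_k: Σ_{σ ∈ S_k} ∏_{1≤B<A≤k} (z_{σ(A)} − z_{σ(B)} − c)/(z_{σ(A)} − z_{σ(B)}) = k!. -/
open Polynomial Finset

lemma coeff_sub_one_eq_sum {k : ℕ} (v : Fin k → ℂ) (hv : Function.Injective v)
    (f : ℂ[X]) (hf : f.degree < k) :
    f.coeff (k - 1) = ∑ i : Fin k, f.eval (v i) * (∏ j ∈ univ.erase i, (v i - v j))⁻¹ := by
  have hvs : Set.InjOn v (univ : Finset (Fin k)) := hv.injOn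
  have hcard : (univ : Finset (Fin k)).card = k := by simp
  conv_lhs => rw [Lagrange.eq_interpolate (f := f) hvs (by rwa [hcard])]
  rw [Lagrange.interpolate_apply, Polynomial.finset_sum_coeff]
  refine Finset.sum_congr rfl fun i _ => ?_
  rw [Polynomial.coeff_C_mul]
  congr 1
  have hd : (Lagrange.basis univ v i).natDegree = k - 1 := by
    rw [Lagrange.natDegree_basis hvs (mem_univ i), hcard]
  rw [← hd, Polynomial.coeff_natDegree]
  unfold Lagrange.basis
  rw [Polynomial.leadingCoeff_prod, ← Finset.prod_inv_distrib]
  refine Finset.prod_congr rfl fun j hj => ?_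
  unfold Lagrange.basisDivisor
  rw [Polynomial.leadingCoeff_mul, Polynomial.leadingCoeff_C,
    (Polynomial.monic_X_sub_C (v j)).leadingCoeff, mul_one]

lemma lagrange_key {k : ℕ} (c : ℂ) (z : Fin k → ℂ) (hz : Function.Injective z) :
    ∑ p : Fin k, ∏ q ∈ univ.erase p, (z q - z p - c) / (z q - z p) = (k : ℂ) := by
  have hne : ∀ p q : Fin k, q ∈ univ.erase p → z q - z p ≠ 0 := fun p q hq =>
    sub_ne_zero_of_ne (hz.ne (Finset.mem_erase.mp hq).1)
  rcases eq_or_ne c 0 with rfl | hc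
  · calc ∑ p : Fin k, ∏ q ∈ univ.erase p, (z q - z p - 0) / (z q - z p)
        = ∑ p : Fin k, (1 : ℂ) := by
          refine Finset.sum_congr rfl fun p _ => ?_
          rw [Finset.prod_eq_one]
          intro q hq
          rw [sub_zero, div_self (hne p q hq)]
      _ = (k : ℂ) := by simp
  rcases Nat.eq_zero_or_pos k with rfl | hk
  · simp
  -- c ≠ 0, k ≥ 1
  set Q : ℂ[X] := ∏ j : Fin k, (X - C (z j - c)) with hQ
  set W : ℂ[X] := ∏ j : Fin k, (X - C (z j)) with hW
  have hQm : Q.Monic := monic_prod_of_monic _ _ fun _ _ => monic_X_sub_C _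
  have hWm : W.Monic := monic_prod_of_monic _ _ fun _ _ => monic_X_sub_C _
  have hQd : Q.natDegree = k := by
    rw [hQ, natDegree_prod_of_monic _ _ fun _ _ => monic_X_sub_C _]
    simp only [natDegree_X_sub_C, Finset.sum_const, card_univ, Fintype.card_fin,
      smul_eq_mul, mul_one]
  have hWd : W.natDegree = k := by
    rw [hW, natDegree_prod_of_monic _ _ fun _ _ => monic_X_sub_C _]
    simp only [natDegree_X_sub_C, Finset.sum_const, card_univ, Fintype.card_fin,
      smul_eq_mul, mul_one]
  have hfd : (Q - W).degree < k := by
    have h1 : Q.degree = W.degree := by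
      rw [Polynomial.degree_eq_natDegree hQm.ne_zero,
        Polynomial.degree_eq_natDegree hWm.ne_zero, hQd, hWd]
    have := Polynomial.degree_sub_lt h1 hQm.ne_zero
      (hQm.leadingCoeff.trans hWm.leadingCoeff.symm)
    rwa [Polynomial.degree_eq_natDegree hQm.ne_zero, hQd] at this
  have hcoeff : (Q - W).coeff (k - 1) = k * c := by
    have h1 : Q.coeff (k - 1) = -∑ j : Fin k, (z j - c) := by
      have h := prod_X_sub_C_coeff_card_pred (univ : Finset (Fin k))
        (fun j : Fin k => z j - c) (by simpa using hk)
      rw [card_univ, Fintype.card_fin] at h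
      rw [hQ]; exact h
    have h2 : W.coeff (k - 1) = -∑ j : Fin k, z j := by
      have h := prod_X_sub_C_coeff_card_pred (univ : Finset (Fin k))
        (fun j : Fin k => z j) (by simpa using hk)
      rw [card_univ, Fintype.card_fin] at h
      rw [hW]; exact h
    rw [Polynomial.coeff_sub, h1, h2, Finset.sum_sub_distrib, Finset.sum_const,
      card_univ, Fintype.card_fin, nsmul_eq_mul]
    ring
  have heval : ∀ p : Fin k, (Q - W).eval (z p) =
      c * ∏ q ∈ univ.erase p, (z p - z q + c) := by
    intro p
    have hWe : W.eval (z p) = 0 := by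
      rw [hW, eval_prod]
      exact Finset.prod_eq_zero (mem_univ p) (by simp)
    rw [eval_sub, hWe, sub_zero, hQ, eval_prod,
      ← Finset.mul_prod_erase univ _ (mem_univ p)]
    congr 1
    · rw [eval_sub, eval_X, eval_C]; ring
    · exact Finset.prod_congr rfl fun q _ => by rw [eval_sub, eval_X, eval_C]; ring
  have key := coeff_sub_one_eq_sum z hz (Q - W) hfd
  rw [hcoeff] at key
  have hterm : ∀ p : Fin k, (Q - W).eval (z p) * (∏ j ∈ univ.erase p, (z p - z j))⁻¹
      = c * ∏ q ∈ univ.erase p, (z q - z p - c) / (z q - z p) := by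
    intro p
    rw [heval p, mul_assoc, ← Finset.prod_inv_distrib, ← Finset.prod_mul_distrib]
    congr 1
    refine Finset.prod_congr rfl fun q hq => ?_
    have ha : z q - z p ≠ 0 := hne p q hq
    have hb : z p - z q ≠ 0 := by rw [← neg_sub]; exact neg_ne_zero.mpr ha
    rw [← div_eq_mul_inv, div_eq_div_iff hb ha]
    ring
  rw [Finset.sum_congr rfl (fun p _ => hterm p), ← Finset.mul_sum] at key
  exact mul_left_cancel₀ hc (key.symm.trans (mul_comm _ _))
open Polynomial Finset

lemma image_swap_succ {n : ℕ} (p : Fin (n + 1)) :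
    Finset.image (fun i : Fin n => Equiv.swap 0 p i.succ) univ = univ.erase p := by
  have hinj : Function.Injective (fun i : Fin n => Equiv.swap 0 p i.succ) :=
    fun a b hab => Fin.succ_injective n ((Equiv.swap 0 p).injective hab)
  apply Finset.eq_of_subset_of_card_le
  · intro q hq
    simp only [Finset.mem_image] at hq
    obtain ⟨i, -, rfl⟩ := hq
    refine Finset.mem_erase.mpr ⟨fun h => ?_, Finset.mem_univ _⟩
    have h2 : Equiv.swap 0 p i.succ = Equiv.swap 0 p 0 := by
      rw [h, Equiv.swap_apply_left]
    exact Fin.succ_ne_zero i ((Equiv.swap 0 p).injective h2)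
  · rw [Finset.card_erase_of_mem (mem_univ p), Finset.card_image_of_injective _ hinj,
      card_univ, card_univ, Fintype.card_fin, Fintype.card_fin]
    omega

lemma main_aux : ∀ (k : ℕ) (c : ℂ) (z : Fin k → ℂ), Function.Injective z →
    (∑ σ : Equiv.Perm (Fin k),
      ∏ B : Fin k, ∏ A : Fin k,
        if B < A then (z (σ A) - z (σ B) - c) / (z (σ A) - z (σ B)) else 1)
    = (Nat.factorial k : ℂ)
  | 0, c, z, hz => by simp
  | (n + 1), c, z, hz => by
    rw [← Equiv.sum_comp (Equiv.Perm.decomposeFin.symm)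
      (fun σ : Equiv.Perm (Fin (n + 1)) => ∏ B : Fin (n + 1), ∏ A : Fin (n + 1),
        if B < A then (z (σ A) - z (σ B) - c) / (z (σ A) - z (σ B)) else 1),
      Fintype.sum_prod_type]
    have hstep : ∀ (p : Fin (n + 1)) (e : Equiv.Perm (Fin n)),
        (∏ B : Fin (n + 1), ∏ A : Fin (n + 1),
          if B < A then
            (z (Equiv.Perm.decomposeFin.symm (p, e) A) -
                z (Equiv.Perm.decomposeFin.symm (p, e) B) - c) /
              (z (Equiv.Perm.decomposeFin.symm (p, e) A) -
                z (Equiv.Perm.decomposeFin.symm (p, e) B))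
          else 1)
        = (∏ q ∈ univ.erase p, (z q - z p - c) / (z q - z p)) *
          ∏ B : Fin n, ∏ A : Fin n,
            if B < A then
              (z (Equiv.swap 0 p (e A).succ) - z (Equiv.swap 0 p (e B).succ) - c) /
                (z (Equiv.swap 0 p (e A).succ) - z (Equiv.swap 0 p (e B).succ))
            else 1 := by
      intro p e
      rw [Fin.prod_univ_succ]
      congr 1
      · -- the B = 0 factor
        rw [Fin.prod_univ_succ]
        simp only [lt_irrefl, if_false, one_mul, Fin.succ_pos, if_true,
          Equiv.Perm.decomposeFin_symm_apply_zero, Equiv.Perm.decomposeFin_symm_apply_succ]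
        have hinj' : ∀ a ∈ (univ : Finset (Fin n)), ∀ b ∈ (univ : Finset (Fin n)),
            Equiv.swap 0 p a.succ = Equiv.swap 0 p b.succ → a = b :=
          fun a _ b _ h => Fin.succ_injective n ((Equiv.swap 0 p).injective h)
        calc ∏ a : Fin n,
              (z (Equiv.swap 0 p (e a).succ) - z p - c) / (z (Equiv.swap 0 p (e a).succ) - z p)
            = ∏ a : Fin n,
              (z (Equiv.swap 0 p a.succ) - z p - c) / (z (Equiv.swap 0 p a.succ) - z p) :=
              Equiv.prod_comp e
                (fun i : Fin n => (z (Equiv.swap 0 p i.succ) - z p - c) /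
                  (z (Equiv.swap 0 p i.succ) - z p))
          _ = ∏ q ∈ univ.image (fun i : Fin n => Equiv.swap 0 p i.succ),
                (z q - z p - c) / (z q - z p) := (Finset.prod_image (f := fun q => (z q - z p - c) / (z q - z p)) hinj').symm
          _ = ∏ q ∈ univ.erase p, (z q - z p - c) / (z q - z p) := by rw [image_swap_succ]
      · -- the B = succ b factors
        refine Finset.prod_congr rfl fun b _ => ?_
        rw [Fin.prod_univ_succ]
        simp only [Fin.not_lt_zero, if_false, one_mul, Fin.succ_lt_succ_iff,
          Equiv.Perm.decomposeFin_symm_apply_succ]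
    calc (∑ p : Fin (n + 1), ∑ e : Equiv.Perm (Fin n),
          ∏ B : Fin (n + 1), ∏ A : Fin (n + 1),
            if B < A then
              (z (Equiv.Perm.decomposeFin.symm (p, e) A) -
                  z (Equiv.Perm.decomposeFin.symm (p, e) B) - c) /
                (z (Equiv.Perm.decomposeFin.symm (p, e) A) -
                  z (Equiv.Perm.decomposeFin.symm (p, e) B))
            else 1)
        = ∑ p : Fin (n + 1),
            (∏ q ∈ univ.erase p, (z q - z p - c) / (z q - z p)) * (Nat.factorial n : ℂ) := by
          refine Finset.sum_congr rfl fun p _ => ?_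
          rw [Finset.sum_congr rfl (fun e _ => hstep p e), ← Finset.mul_sum]
          congr 1
          exact main_aux n c (fun i => z (Equiv.swap 0 p i.succ))
            (fun a b h => Fin.succ_injective n ((Equiv.swap 0 p).injective (hz h)))
      _ = ((n : ℂ) + 1) * (Nat.factorial n : ℂ) := by
          rw [← Finset.sum_mul, lagrange_key c z hz]
          push_cast
          ring
      _ = (Nat.factorial (n + 1) : ℂ) := by
          rw [Nat.factorial_succ]
          push_cast
          ring

/-- The additive degeneration of the Hall–Littlewood normalization identity:
`Σ_{σ∈S_k} ∏_{B<A} (z_{σ(A)} − z_{σ(B)} − c)/(z_{σ(A)} − z_{σ(B)}) = k!`. -/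
theorem typeA_symmetrization_identity
    (k : ℕ) (hk : 1 ≤ k) (c : ℂ) (z : Fin k → ℂ)
    (hz : ∀ i j : Fin k, i ≠ j → z i ≠ z j) :
    (∑ σ : Equiv.Perm (Fin k),
      ∏ B : Fin k, ∏ A : Fin k,
        if B < A then (z (σ A) - z (σ B) - c) / (z (σ A) - z (σ B)) else 1)
    = (Nat.factorial k : ℂ) := by
  exact main_aux k c z fun a b hab => by_contra fun hne => hz a b hne hab
end

section
/- For every integer k ≥ 1, all c, a ∈ ℂ, and all complex numbers z_1,…,z_k with z_j ≠ 0 for all j and z_i ≠ z_j and z_i ≠ −z_j for all i ≠ j: Σ_{σ ∈ BC_k} ∏_{1≤B<A≤k} [(z_{σ(A)} − z_{σ(B)} − c)(z_{σ(A)} + z_{σ(B)} − c)] / [(z_{σ(A)} − z_{σ(B)})(z_{σ(A)} + z_{σ(B)})] · ∏_{j=1}^{k} (z_{σ(j)} − a)/z_{σ(j)} = 2^k · k!. -/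
open Finset Polynomial



lemma basis_coeff {s : Finset ℂ} {i : ℂ} (hi : i ∈ s) :
    (Lagrange.basis s id i).coeff (#s - 1) = Lagrange.nodalWeight s id i := by
  have : Lagrange.basis s id i =
      C (Lagrange.nodalWeight s id i) * Lagrange.nodal (s.erase i) id := by
    simp_rw [Lagrange.basis, Lagrange.basisDivisor, Lagrange.nodalWeight, prod_mul_distrib,
      map_prod, Lagrange.nodal_eq]
  rw [this, coeff_C_mul]
  have hd : (Lagrange.nodal (s.erase i) id).natDegree = #s - 1 := by
    rw [Lagrange.natDegree_nodal, card_erase_of_mem hi]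
  rw [← hd, Polynomial.Monic.coeff_natDegree Lagrange.nodal_monic, mul_one]

lemma lagrange_coeff_sum {s : Finset ℂ} {R : ℂ[X]} (hR : R.degree < #s) :
    R.coeff (#s - 1) = ∑ i ∈ s, R.eval i * Lagrange.nodalWeight s id i := by
  have h := Lagrange.eq_interpolate (f := R) (v := id) (Set.injOn_id _) hR
  conv_lhs => rw [h]
  rw [Lagrange.interpolate_apply, finset_sum_coeff]
  refine Finset.sum_congr rfl fun j hj => ?_
  rw [coeff_C_mul, basis_coeff hj]
  rfl



lemma prod_erase_succAbove {n : ℕ} (i : Fin (n+1)) (f : Fin (n+1) → ℂ) :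
    ∏ j ∈ Finset.univ.erase i, f j = ∏ j : Fin n, f (i.succAbove j) := by
  rw [← Finset.compl_singleton, ← Fin.image_succAbove_univ, Finset.prod_image
    (fun a _ b _ h => (Fin.succAbove_right_injective (p := i)) h)]



section PolyFacts
variable {n : ℕ} (c a : ℂ) (z : Fin (n+1) → ℂ)

noncomputable def qf (j : Fin (n+1)) : ℂ[X] := X^2 + (C (-(2*c)) * X + C (c^2 - z j^2))

lemma qf_monic (j : Fin (n+1)) : (qf c z j).Monic :=
  monic_X_pow_add (lt_of_le_of_lt degree_linear_le (by norm_num))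

lemma qf_natDegree (j : Fin (n+1)) : (qf c z j).natDegree = 2 := by
  rw [qf]
  rw [natDegree_eq_of_degree_eq_some]
  rw [degree_add_eq_left_of_degree_lt (lt_of_le_of_lt degree_linear_le (by rw [degree_X_pow]; norm_num))]
  simp

lemma qf_nextCoeff (j : Fin (n+1)) : (qf c z j).nextCoeff = -(2*c) := by
  rw [nextCoeff_of_natDegree_pos (by rw [qf_natDegree]; norm_num), qf_natDegree]
  rw [qf]
  simp only [coeff_add, coeff_X_pow, coeff_C_mul, coeff_X_one, coeff_C]
  norm_num

lemma qf_eval (j : Fin (n+1)) (x : ℂ) : (qf c z j).eval x = (x - c)^2 - z j ^2 := by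
  simp [qf]; ring

noncomputable def Qp : ℂ[X] := ∏ j : Fin (n+1), qf c z j

lemma Qp_monic : (Qp c z).Monic := monic_prod_of_monic _ _ fun j _ => qf_monic c z j

lemma Qp_natDegree : (Qp c z).natDegree = 2*n+2 := by
  rw [Qp, natDegree_prod _ _ (fun j _ => (qf_monic c z j).ne_zero)]
  simp [qf_natDegree]; ring

lemma Qp_nextCoeff : (Qp c z).nextCoeff = -(2*(n+1)*c) := by
  rw [Qp, Monic.nextCoeff_prod _ _ (fun j _ => qf_monic c z j)]
  simp [qf_nextCoeff]; ring

noncomputable def Pp : ℂ[X] := (X - C a) * Qp c z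

lemma Pp_monic : (Pp c a z).Monic := (monic_X_sub_C a).mul (Qp_monic c z)

lemma Pp_natDegree : (Pp c a z).natDegree = 2*n+3 := by
  rw [Pp, (monic_X_sub_C a).natDegree_mul (Qp_monic c z), natDegree_X_sub_C, Qp_natDegree]
  omega

lemma Pp_coeff_top : (Pp c a z).coeff (2*n+2) = -a - 2*(n+1)*c := by
  have h1 : (Pp c a z).nextCoeff = -a + -(2*(n+1)*c) := by
    rw [Pp, Monic.nextCoeff_mul (monic_X_sub_C a) (Qp_monic c z), nextCoeff_X_sub_C,
      Qp_nextCoeff]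
  rw [nextCoeff_of_natDegree_pos (by rw [Pp_natDegree]; omega), Pp_natDegree] at h1
  rw [show 2*n+2 = 2*n+3-1 by omega, h1]; ring

lemma Pp_eval (x : ℂ) : (Pp c a z).eval x = (x - a) * ∏ j : Fin (n+1), ((x - c)^2 - z j^2) := by
  rw [Pp, Qp, eval_mul, eval_prod]
  simp [qf_eval]

end PolyFacts

lemma erase_pair {m : ℕ} (p : Fin m × Bool) :
    (Finset.univ.erase p) = insert (p.1, !p.2) ((Finset.univ.erase p.1) ×ˢ (Finset.univ : Finset Bool)) := by
  obtain ⟨i, η⟩ := p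
  ext ⟨j, θ⟩
  cases η <;> cases θ <;> simp [Prod.ext_iff] <;> tauto

lemma keyGeneric (n : ℕ) (c a : ℂ) (z : Fin (n+1) → ℂ)
    (hz0 : ∀ j, z j ≠ 0)
    (hz : ∀ i j : Fin (n+1), i ≠ j → z i ≠ z j ∧ z i ≠ -z j)
    (hc0 : c ≠ 0)
    (hcw : ∀ i : Fin (n+1), c/2 ≠ z i ∧ c/2 ≠ -z i) :
    ∑ p : Fin (n+1) × Bool,
      (((if p.2 then (1:ℂ) else -1) * z p.1 - a) / ((if p.2 then (1:ℂ) else -1) * z p.1)) *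
      ∏ j : Fin n, (((if p.2 then (1:ℂ) else -1) * z p.1 - c)^2 - z (p.1.succAbove j)^2) /
        (((if p.2 then (1:ℂ) else -1) * z p.1)^2 - z (p.1.succAbove j)^2)
    = 2*(n+1) := by
  classical
  set w : Fin (n+1) × Bool → ℂ := fun p => (if p.2 then (1:ℂ) else -1) * z p.1 with hw
  have hwsq : ∀ p, (w p)^2 = z p.1 ^ 2 := by
    intro p; rcases p with ⟨i, (_|_)⟩ <;> simp [hw] <;> ring
  have hwne : ∀ p, w p ≠ 0 := by
    intro ⟨i, b⟩; rcases b <;> simp [hw, hz0 i]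
  have hwinj : Function.Injective w := by
    rintro ⟨i, bi⟩ ⟨j, bj⟩ h
    rcases eq_or_ne i j with rfl | hij
    · rcases bi <;> rcases bj <;> simp_all [hw]
      · exact absurd (by linear_combination -h/2 : z i = 0) (hz0 i)
      · exact absurd (by linear_combination h/2 : z i = 0) (hz0 i)
    · exfalso
      rcases bi <;> rcases bj <;> simp [hw] at h
      · exact (hz i j hij).1 h
      · exact (hz i j hij).2 (by linear_combination -h)
      · exact (hz i j hij).2 h
      · exact (hz i j hij).1 h
  have hcw' : ∀ p, c/2 ≠ w p := by
    intro ⟨i, b⟩; rcases b <;> simp [hw]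
    · exact fun h => (hcw i).2 (by linear_combination h)
    · exact (hcw i).1
  have hwneg : ∀ p : Fin (n+1) × Bool, w (p.1, !p.2) = - w p := by
    intro ⟨i, b⟩; rcases b <;> simp [hw]
  have hwt : ∀ j, w (j, true) = z j := by intro j; simp [hw]
  have hwf : ∀ j, w (j, false) = -z j := by intro j; simp [hw]
  set H : Fin (n+1) × Bool → ℂ := fun p =>
      ((w p - a) / (w p)) *
      ∏ j : Fin n, ((w p - c)^2 - z (p.1.succAbove j)^2) /
        ((w p)^2 - z (p.1.succAbove j)^2) with hH
  -- the node set
  clear_value w H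
  set T : Finset ℂ := insert (c/2) (Finset.image w Finset.univ) with hT
  have hc2T : (c/2) ∉ Finset.image w Finset.univ := by
    intro hmem
    obtain ⟨p, -, hp⟩ := Finset.mem_image.mp hmem
    exact hcw' p hp.symm
  have hcard : #T = 2*n+3 := by
    rw [hT, Finset.card_insert_of_notMem hc2T, Finset.card_image_of_injective _ hwinj]
    simp [Fintype.card_prod]; ring
  clear_value T
  set V : ℂ[X] := Lagrange.nodal T id with hV
  have hVm : V.Monic := Lagrange.nodal_monic
  have hVdeg : V.natDegree = 2*n+3 := by rw [hV, Lagrange.natDegree_nodal, hcard]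
  clear_value V
  set R : ℂ[X] := C 2 * (Pp c a z - V) with hR
  clear_value R
  have hdegR : R.degree < (#T : ℕ) := by
    have h1 : (Pp c a z - V).degree < ((2*n+3 : ℕ) : WithBot ℕ) := by
      have hd : (Pp c a z).degree = V.degree := by
        rw [degree_eq_natDegree (Pp_monic c a z).ne_zero, degree_eq_natDegree hVm.ne_zero,
          Pp_natDegree, hVdeg]
      have := degree_sub_lt hd (Pp_monic c a z).ne_zero
        (by rw [(Pp_monic c a z).leadingCoeff, hVm.leadingCoeff])
      rwa [degree_eq_natDegree (Pp_monic c a z).ne_zero, Pp_natDegree] at this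
    calc R.degree = (Pp c a z - V).degree := by
          rw [hR, degree_C_mul (by norm_num : (2:ℂ) ≠ 0)]
      _ < ((2*n+3 : ℕ) : WithBot ℕ) := h1
      _ = (#T : ℕ) := by rw [hcard]
  have key := lagrange_coeff_sum hdegR
  -- coefficient side
  have hVc : V.coeff (2*n+2) = -(c/2) := by
    have hsum0 : ∑ p : Fin (n+1) × Bool, w p = 0 := by
      simp only [hw]
      rw [Fintype.sum_prod_type]
      simp
    have hnc : V.nextCoeff = -(c/2) := by
      rw [hV, Lagrange.nodal, Monic.nextCoeff_prod _ _ (fun t _ => monic_X_sub_C (id t))]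
      simp only [nextCoeff_X_sub_C, id]
      rw [Finset.sum_neg_distrib, hT, Finset.sum_insert hc2T,
        Finset.sum_image (fun x _ y _ h => hwinj h), hsum0]
      ring
    rw [show 2*n+2 = V.natDegree - 1 by omega, ← nextCoeff_of_natDegree_pos (by omega), hnc]
  have hRcoeff : R.coeff (#T - 1) = 2 * (-a - 2*(n+1)*c + c/2) := by
    rw [hcard, show 2*n+3-1 = 2*n+2 by omega, hR, coeff_C_mul, coeff_sub, Pp_coeff_top, hVc]
    ring
  -- evaluation side
  have hVeval : ∀ x ∈ T, V.eval x = 0 := by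
    intro x hx
    have := Lagrange.eval_nodal_at_node (v := id) (i := x) hx
    simpa [hV] using this
  have hterm_half : R.eval (c/2) * Lagrange.nodalWeight T id (c/2) = c - 2*a := by
    rw [hR, eval_mul, eval_C, eval_sub, hVeval _ (by rw [hT]; exact Finset.mem_insert_self _ _), Pp_eval]
    rw [Lagrange.nodalWeight, hT, Finset.erase_insert hc2T,
      Finset.prod_image (fun x _ y _ h => hwinj h)]
    have h1 : ∀ p : Fin (n+1) × Bool, (id (c/2) - id (w p))⁻¹ = (c/2 - w p)⁻¹ := fun _ => rfl
    rw [Fintype.prod_prod_type]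
    have h2 : ∀ i : Fin (n+1), ∏ b : Bool, (id (c/2) - id (w (i, b)))⁻¹
        = ((c/2 - c)^2 - z i^2)⁻¹ := by
      intro i
      rw [Fintype.prod_bool, ← mul_inv, hwt, hwf]
      simp only [id_eq]
      congr 1
      ring
    rw [Finset.prod_congr rfl (fun i _ => h2 i)]
    have hprod : (∏ i : Fin (n+1), ((c/2 - c)^2 - z i^2)⁻¹) *
        (∏ i : Fin (n+1), ((c/2 - c)^2 - z i^2)) = 1 := by
      rw [← Finset.prod_mul_distrib]
      apply Finset.prod_eq_one
      intro i _
      apply inv_mul_cancel₀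
      have : (c/2 - c)^2 - z i^2 = (c/2 - z i) * (c/2 + z i) := by ring
      rw [this]
      exact mul_ne_zero (sub_ne_zero.mpr (hcw i).1)
        (by intro h; exact (hcw i).2 (by linear_combination h))
    linear_combination (2*(c/2 - a)) * hprod
  have hterm : ∀ p : Fin (n+1) × Bool,
      R.eval (w p) * Lagrange.nodalWeight T id (w p) = (-(2*c)) * H p := by
    intro p
    have hmemT : w p ∈ T := by
      rw [hT]; exact Finset.mem_insert_of_mem (Finset.mem_image_of_mem _ (Finset.mem_univ p))
    rw [hR, eval_mul, eval_C, eval_sub, hVeval _ hmemT, Pp_eval]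
    -- split product at j = p.1
    rw [← Finset.mul_prod_erase Finset.univ _ (Finset.mem_univ p.1)]
    have hFi : (w p - c)^2 - z p.1^2 = (-(2*c)) * (w p - c/2) := by
      linear_combination hwsq p
    rw [hFi]
    -- nodal weight
    rw [Lagrange.nodalWeight]
    have hTe : T.erase (w p) = insert (c/2) (Finset.image w (Finset.univ.erase p)) := by
      rw [hT, Finset.erase_insert_of_ne (hcw' p), Finset.image_erase hwinj]
    rw [hTe, Finset.prod_insert (by
      intro hmem
      exact hc2T (Finset.mem_of_subset (Finset.image_subset_image (Finset.erase_subset _ _)) hmem)),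
      Finset.prod_image (fun x hx y hy h => hwinj h)]
    rw [erase_pair p, Finset.prod_insert (by simp)]
    rw [Finset.prod_product]
    have h4 : ∀ j : Fin (n+1), ∏ b : Bool, (id (w p) - id (w (j, b)))⁻¹
        = (w p - z j)⁻¹ * (w p + z j)⁻¹ := by
      intro j
      rw [Fintype.prod_bool, hwt, hwf]
      simp only [id_eq]
      congr 2
      ring
    rw [Finset.prod_congr rfl (fun j _ => h4 j)]
    have h5 : (id (w p) - id (w (p.1, !p.2)))⁻¹ = (2 * w p)⁻¹ := by
      rw [hwneg p]; simp only [id_eq]; congr 1; ring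
    rw [h5]
    -- now rewrite H p
    simp only [hH]
    rw [← prod_erase_succAbove p.1 (fun j => ((w p - c)^2 - z j^2) / ((w p)^2 - z j^2))]
    have h6 : ∀ j ∈ Finset.univ.erase p.1,
        ((w p - c)^2 - z j^2) / ((w p)^2 - z j^2)
        = ((w p - c)^2 - z j^2) * ((w p - z j)⁻¹ * (w p + z j)⁻¹) := by
      intro j _
      rw [div_eq_mul_inv, ← mul_inv]
      congr 2
      ring
    conv_rhs => rw [Finset.prod_congr rfl h6, Finset.prod_mul_distrib]
    simp only [id_eq]
    have hB : w p - c/2 ≠ 0 := sub_ne_zero.mpr (fun h => hcw' p h.symm)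
    have hK : 2 * ((w p - a) * ((-(2*c)) * (w p - c/2))) * ((w p - c/2)⁻¹ * (2 * w p)⁻¹)
        = (-(2*c)) * ((w p - a) / (w p)) := by
      have hx := hwne p
      have h1 : (w p - c/2) * (w p - c/2)⁻¹ = 1 := mul_inv_cancel₀ hB
      have h2 : (2*(w p)) * (2*(w p))⁻¹ = 1 := mul_inv_cancel₀ (by simpa using hx)
      have h3 : (w p) * (w p)⁻¹ = 1 := mul_inv_cancel₀ hx
      rw [div_eq_mul_inv]
      linear_combination (-4*c*(w p - a)) * (2*(w p))⁻¹ * h1 +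
        (-2*c*(w p - a)) * (w p)⁻¹ * h2 - (-4*c*(w p - a)) * (2*(w p))⁻¹ * h3
    linear_combination ((∏ j ∈ Finset.univ.erase p.1, ((w p - c)^2 - z j^2)) *
      (∏ j ∈ Finset.univ.erase p.1, ((w p - z j)⁻¹ * (w p + z j)⁻¹))) * hK
  -- assemble
  have hsum : ∑ t ∈ T, R.eval t * Lagrange.nodalWeight T id t
      = (c - 2*a) + (-(2*c)) * ∑ p : Fin (n+1) × Bool, H p := by
    rw [hT, Finset.sum_insert hc2T, Finset.sum_image (fun x _ y _ h => hwinj h), ← hT,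
      hterm_half, Finset.mul_sum]
    congr 1
    exact Finset.sum_congr rfl (fun p _ => hterm p)
  rw [hRcoeff, hsum] at key
  have h2 : (-(2*c)) * ∑ p : Fin (n+1) × Bool, H p = (-(2*c)) * (2*(n+1)) := by
    linear_combination -key
  exact mul_left_cancel₀ (by simp [hc0] : (-(2*c)) ≠ 0) h2

lemma keyLemma (n : ℕ) (c a : ℂ) (z : Fin (n+1) → ℂ)
    (hz0 : ∀ j, z j ≠ 0)
    (hz : ∀ i j : Fin (n+1), i ≠ j → z i ≠ z j ∧ z i ≠ -z j) :
    ∑ i : Fin (n+1), ∑ b : Bool,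
      (((if b then (1:ℂ) else -1) * z i - a) / ((if b then (1:ℂ) else -1) * z i)) *
      ∏ j : Fin n, (((if b then (1:ℂ) else -1) * z i - c)^2 - z (i.succAbove j)^2) /
        (((if b then (1:ℂ) else -1) * z i)^2 - z (i.succAbove j)^2)
    = 2*(n+1) := by
  classical
  rw [← Fintype.sum_prod_type']
  -- express as polynomial evaluation in c
  set P : ℂ[X] := ∑ p : Fin (n+1) × Bool,
      C (((if p.2 then (1:ℂ) else -1) * z p.1 - a) / ((if p.2 then (1:ℂ) else -1) * z p.1)) *
      ∏ j : Fin n, (C ((((if p.2 then (1:ℂ) else -1) * z p.1)^2 - z (p.1.succAbove j)^2)⁻¹) *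
        ((C ((if p.2 then (1:ℂ) else -1) * z p.1) - X)^2 - C (z (p.1.succAbove j)^2))) with hP
  have hPeval : ∀ x : ℂ, P.eval x = ∑ p : Fin (n+1) × Bool,
      (((if p.2 then (1:ℂ) else -1) * z p.1 - a) / ((if p.2 then (1:ℂ) else -1) * z p.1)) *
      ∏ j : Fin n, (((if p.2 then (1:ℂ) else -1) * z p.1 - x)^2 - z (p.1.succAbove j)^2) /
        (((if p.2 then (1:ℂ) else -1) * z p.1)^2 - z (p.1.succAbove j)^2) := by
    intro x
    rw [hP, eval_finset_sum]
    refine Finset.sum_congr rfl fun p _ => ?_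
    rw [eval_mul, eval_C, eval_prod]
    congr 1
    refine Finset.prod_congr rfl fun j _ => ?_
    rw [eval_mul, eval_C, eval_sub, eval_pow, eval_sub, eval_C, eval_X, eval_C]
    rw [div_eq_mul_inv, mul_comm]
  -- the good set is infinite
  set G : Set ℂ := {x : ℂ | x ≠ 0 ∧ ∀ i : Fin (n+1), x/2 ≠ z i ∧ x/2 ≠ -z i} with hG
  have hGinf : G.Infinite := by
    have hfin : Set.Finite ({(0:ℂ)} ∪ (Set.range (fun i => 2 * z i) ∪
        Set.range (fun i : Fin (n+1) => -(2 * z i)))) := by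
      apply Set.Finite.union (Set.finite_singleton _)
      exact Set.Finite.union (Set.finite_range _) (Set.finite_range _)
    refine Set.Infinite.mono ?_ (Set.Finite.infinite_compl hfin)
    intro x hx
    · 
      simp only [Set.mem_compl_iff, Set.mem_union, Set.mem_singleton_iff, Set.mem_range,
        not_or, not_exists] at hx
      refine ⟨hx.1, fun i => ⟨fun h => hx.2.1 i ?_, fun h => hx.2.2 i ?_⟩⟩
      · linear_combination -2*h
      · linear_combination -2*h
  -- P agrees with the constant on G
  have hagree : ∀ x ∈ G, P.eval x = (C (2*((n:ℂ)+1))).eval x := by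
    intro x hx
    rw [hPeval, eval_C]
    exact keyGeneric n x a z hz0 hz hx.1 hx.2
  have hPC : P = C (2*((n:ℂ)+1)) := by
    apply Polynomial.eq_of_infinite_eval_eq
    exact Set.Infinite.mono (fun x hx => hagree x hx) hGinf
  have h := hPeval c
  rw [hPC, eval_C] at h
  rw [← h]

/-- The additive action of a signed permutation `(σ, ε) ∈ BC_k = S_k ⋉ {±1}^k` on a tuple:
`z_{σ(j)} = ε_j · z_{σ(j)}`. -/
def signedApply {k : ℕ} (z : Fin k → ℂ) (σ : Equiv.Perm (Fin k)) (ε : Fin k → Bool)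
    (j : Fin k) : ℂ :=
  (if ε j then (1 : ℂ) else -1) * z (σ j)


lemma mainLemma (k : ℕ) (c a : ℂ) (z : Fin k → ℂ)
    (hz0 : ∀ j : Fin k, z j ≠ 0)
    (hz : ∀ i j : Fin k, i ≠ j → z i ≠ z j ∧ z i ≠ -z j) :
    (∑ σ : Equiv.Perm (Fin k), ∑ ε : Fin k → Bool,
      (∏ B : Fin k, ∏ A : Fin k,
        if B < A then
          ((signedApply z σ ε A - signedApply z σ ε B - c) *
            (signedApply z σ ε A + signedApply z σ ε B - c)) /
          ((signedApply z σ ε A - signedApply z σ ε B) *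
            (signedApply z σ ε A + signedApply z σ ε B))
        else 1) *
      ∏ j : Fin k, (signedApply z σ ε j - a) / signedApply z σ ε j)
    = (2 : ℂ) ^ k * (Nat.factorial k : ℂ) := by
  induction k with
  | zero =>
      simp [Finset.univ_unique, Nat.factorial]
  | succ n IH =>
      classical
      set E : Fin (n+1) × Equiv.Perm (Fin n) → Equiv.Perm (Fin (n+1)) := fun q =>
        (finSuccEquivLast.trans ((Equiv.optionCongr q.2).trans (finSuccEquiv' q.1).symm)) with hE
      have hE1 : ∀ q, E q (Fin.last n) = q.1 := by
        intro q; simp [hE]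
      have hE2 : ∀ q (j : Fin n), E q (Fin.castSucc j) = q.1.succAbove (q.2 j) := by
        intro q j; simp [hE]
      have hEbij : Function.Bijective E := by
        rw [Fintype.bijective_iff_injective_and_card]
        constructor
        · intro q q' h
          have h1 : q.1 = q'.1 := by rw [← hE1 q, ← hE1 q', h]
          have h2 : q.2 = q'.2 := by
            ext j
            have h3 := congrArg (fun σ : Equiv.Perm (Fin (n+1)) => σ (Fin.castSucc j)) h
            simp only [hE2] at h3
            rw [h1] at h3
            exact Fin.val_eq_of_eq (Fin.succAbove_right_injective h3)
          exact Prod.ext h1 h2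
        · simp [Fintype.card_perm, Nat.factorial_succ, Fintype.card_prod]
      set Sn : (Fin n → Bool) × Bool → (Fin (n+1) → Bool) := fun e => Fin.snoc e.1 e.2 with hSn
      have hSnbij : Function.Bijective Sn := by
        rw [Fintype.bijective_iff_injective_and_card]
        constructor
        · intro e e' h
          have h1 : e.1 = e'.1 := by
            funext j
            have := congrFun h (Fin.castSucc j)
            simpa [hSn] using this
          have h2 : e.2 = e'.2 := by
            have := congrFun h (Fin.last n)
            simpa [hSn] using this
          exact Prod.ext h1 h2
        · simp [Fintype.card_prod, Fintype.card_fun, pow_succ]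
      set Inner : Fin (n+1) → Equiv.Perm (Fin n) → (Fin n → Bool) → ℂ := fun i τ ε' =>
        (∏ B : Fin n, ∏ A : Fin n,
          if B < A then
            ((signedApply (fun j' => z (i.succAbove j')) τ ε' A -
                signedApply (fun j' => z (i.succAbove j')) τ ε' B - c) *
              (signedApply (fun j' => z (i.succAbove j')) τ ε' A +
                signedApply (fun j' => z (i.succAbove j')) τ ε' B - c)) /
            ((signedApply (fun j' => z (i.succAbove j')) τ ε' A -
                signedApply (fun j' => z (i.succAbove j')) τ ε' B) *
              (signedApply (fun j' => z (i.succAbove j')) τ ε' A +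
                signedApply (fun j' => z (i.succAbove j')) τ ε' B))
          else 1) *
        ∏ j : Fin n, (signedApply (fun j' => z (i.succAbove j')) τ ε' j - a) /
          signedApply (fun j' => z (i.succAbove j')) τ ε' j with hInner
      set Outer : Fin (n+1) → Bool → ℂ := fun i b =>
        (((if b then (1:ℂ) else -1) * z i - a) / ((if b then (1:ℂ) else -1) * z i)) *
        ∏ j : Fin n, (((if b then (1:ℂ) else -1) * z i - c)^2 - z (i.succAbove j)^2) /
          (((if b then (1:ℂ) else -1) * z i)^2 - z (i.succAbove j)^2) with hOuter
      rw [← Equiv.sum_comp (Equiv.ofBijective E hEbij)]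
      simp only [Equiv.ofBijective_apply]
      have hinner : ∀ q : Fin (n+1) × Equiv.Perm (Fin n),
          (∑ ε : Fin (n+1) → Bool,
            (∏ B : Fin (n+1), ∏ A : Fin (n+1),
              if B < A then
                ((signedApply z (E q) ε A - signedApply z (E q) ε B - c) *
                  (signedApply z (E q) ε A + signedApply z (E q) ε B - c)) /
                ((signedApply z (E q) ε A - signedApply z (E q) ε B) *
                  (signedApply z (E q) ε A + signedApply z (E q) ε B))
              else 1) *
            ∏ j : Fin (n+1), (signedApply z (E q) ε j - a) / signedApply z (E q) ε j)
          = ∑ e : (Fin n → Bool) × Bool, Inner q.1 q.2 e.1 * Outer q.1 e.2 := by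
        intro q
        rw [← Equiv.sum_comp (Equiv.ofBijective Sn hSnbij)]
        simp only [Equiv.ofBijective_apply]
        refine Finset.sum_congr rfl fun e _ => ?_
        obtain ⟨ε', b⟩ := e
        set r : ℂ := (if b then (1:ℂ) else -1) * z q.1 with hr
        have hsa_last : signedApply z (E q) (Sn (ε', b)) (Fin.last n) = r := by
          simp [signedApply, hSn, Fin.snoc_last, hE1, hr]
        have hsa_cast : ∀ j : Fin n, signedApply z (E q) (Sn (ε', b)) (Fin.castSucc j)
            = signedApply (fun j' => z (q.1.succAbove j')) q.2 ε' j := by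
          intro j; simp [signedApply, hSn, Fin.snoc_castSucc, hE2]
        rw [Fin.prod_univ_castSucc
          (f := fun B => ∏ A : Fin (n+1),
            if B < A then
              ((signedApply z (E q) (Sn (ε', b)) A - signedApply z (E q) (Sn (ε', b)) B - c) *
                (signedApply z (E q) (Sn (ε', b)) A + signedApply z (E q) (Sn (ε', b)) B - c)) /
              ((signedApply z (E q) (Sn (ε', b)) A - signedApply z (E q) (Sn (ε', b)) B) *
                (signedApply z (E q) (Sn (ε', b)) A + signedApply z (E q) (Sn (ε', b)) B))
            else 1)]
        have hlastrow : (∏ A : Fin (n+1),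
            if (Fin.last n) < A then
              ((signedApply z (E q) (Sn (ε', b)) A - signedApply z (E q) (Sn (ε', b)) (Fin.last n) - c) *
                (signedApply z (E q) (Sn (ε', b)) A + signedApply z (E q) (Sn (ε', b)) (Fin.last n) - c)) /
              ((signedApply z (E q) (Sn (ε', b)) A - signedApply z (E q) (Sn (ε', b)) (Fin.last n)) *
                (signedApply z (E q) (Sn (ε', b)) A + signedApply z (E q) (Sn (ε', b)) (Fin.last n)))
            else 1) = 1 :=
          Finset.prod_eq_one fun A _ => if_neg (Fin.le_last A).not_gt
        rw [hlastrow, mul_one]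
        have hrow : ∀ B : Fin n, (∏ A : Fin (n+1),
            if (Fin.castSucc B) < A then
              ((signedApply z (E q) (Sn (ε', b)) A - signedApply z (E q) (Sn (ε', b)) (Fin.castSucc B) - c) *
                (signedApply z (E q) (Sn (ε', b)) A + signedApply z (E q) (Sn (ε', b)) (Fin.castSucc B) - c)) /
              ((signedApply z (E q) (Sn (ε', b)) A - signedApply z (E q) (Sn (ε', b)) (Fin.castSucc B)) *
                (signedApply z (E q) (Sn (ε', b)) A + signedApply z (E q) (Sn (ε', b)) (Fin.castSucc B)))
            else 1)
            = (∏ A : Fin n,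
              if B < A then
                ((signedApply (fun j' => z (q.1.succAbove j')) q.2 ε' A -
                    signedApply (fun j' => z (q.1.succAbove j')) q.2 ε' B - c) *
                  (signedApply (fun j' => z (q.1.succAbove j')) q.2 ε' A +
                    signedApply (fun j' => z (q.1.succAbove j')) q.2 ε' B - c)) /
                ((signedApply (fun j' => z (q.1.succAbove j')) q.2 ε' A -
                    signedApply (fun j' => z (q.1.succAbove j')) q.2 ε' B) *
                  (signedApply (fun j' => z (q.1.succAbove j')) q.2 ε' A +
                    signedApply (fun j' => z (q.1.succAbove j')) q.2 ε' B))
              else 1) *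
              (((r - c)^2 - z (q.1.succAbove (q.2 B))^2) / (r^2 - z (q.1.succAbove (q.2 B))^2)) := by
          intro B
          rw [Fin.prod_univ_castSucc]
          congr 1
          · refine Finset.prod_congr rfl fun A _ => ?_
            by_cases h : B < A
            · rw [if_pos h, if_pos (Fin.castSucc_lt_castSucc_iff.mpr h), hsa_cast, hsa_cast]
            · rw [if_neg h, if_neg (fun hcon => h (Fin.castSucc_lt_castSucc_iff.mp hcon))]
          · rw [if_pos (Fin.castSucc_lt_last B), hsa_last, hsa_cast]
            have hy2 : (signedApply (fun j' => z (q.1.succAbove j')) q.2 ε' B)^2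
                = (z (q.1.succAbove (q.2 B)))^2 := by
              cases h : ε' B <;> simp [signedApply, h] <;> ring
            congr 1
            · linear_combination -hy2
            · linear_combination -hy2
        rw [Finset.prod_congr rfl (fun B _ => hrow B), Finset.prod_mul_distrib]
        have hcf : (∏ B : Fin n, (((r - c)^2 - z (q.1.succAbove (q.2 B))^2) /
              (r^2 - z (q.1.succAbove (q.2 B))^2)))
            = ∏ B : Fin n, (((r - c)^2 - z (q.1.succAbove B)^2) / (r^2 - z (q.1.succAbove B)^2)) :=
          Equiv.prod_comp q.2 (fun j => ((r - c)^2 - z (q.1.succAbove j)^2) /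
            (r^2 - z (q.1.succAbove j)^2))
        rw [hcf]
        have hgp : (∏ j : Fin (n+1), (signedApply z (E q) (Sn (ε', b)) j - a) /
              signedApply z (E q) (Sn (ε', b)) j)
            = (∏ j : Fin n, (signedApply (fun j' => z (q.1.succAbove j')) q.2 ε' j - a) /
              signedApply (fun j' => z (q.1.succAbove j')) q.2 ε' j) * ((r - a)/r) := by
          rw [Fin.prod_univ_castSucc, hsa_last]
          congr 1
          exact Finset.prod_congr rfl fun j _ => by rw [hsa_cast]
        rw [hgp]
        simp only [hInner, hOuter, ← hr]
        ring
      rw [Finset.sum_congr rfl (fun q _ => hinner q)]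
      rw [Fintype.sum_prod_type]
      have hIH : ∀ i : Fin (n+1),
          (∑ τ : Equiv.Perm (Fin n), ∑ ε' : Fin n → Bool, Inner i τ ε')
          = (2:ℂ)^n * (Nat.factorial n : ℂ) := by
        intro i
        have h0' : ∀ j : Fin n, (fun j' => z (i.succAbove j')) j ≠ 0 := fun j => hz0 _
        have h1' : ∀ i' j' : Fin n, i' ≠ j' →
            (fun j'' => z (i.succAbove j'')) i' ≠ (fun j'' => z (i.succAbove j'')) j' ∧
            (fun j'' => z (i.succAbove j'')) i' ≠ -(fun j'' => z (i.succAbove j'')) j' := by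
          intro i' j' hne
          exact hz _ _ (fun hcon => hne (Fin.succAbove_right_injective hcon))
        have h2 := IH (fun j' => z (i.succAbove j')) h0' h1'
        simp only [hInner]
        exact h2
      have hsplit : ∀ i : Fin (n+1),
          (∑ τ : Equiv.Perm (Fin n), ∑ e : (Fin n → Bool) × Bool, Inner i τ e.1 * Outer i e.2)
          = (∑ τ : Equiv.Perm (Fin n), ∑ ε' : Fin n → Bool, Inner i τ ε') *
            (∑ b : Bool, Outer i b) := by
        intro i
        rw [Finset.sum_mul]
        refine Finset.sum_congr rfl fun τ _ => ?_
        rw [Fintype.sum_prod_type, Finset.sum_mul]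
        refine Finset.sum_congr rfl fun ε' _ => ?_
        rw [Finset.mul_sum]
      rw [Finset.sum_congr rfl (fun i (_ : i ∈ Finset.univ) => by rw [hsplit i, hIH i])]
      rw [← Finset.mul_sum]
      have hkey : (∑ i : Fin (n+1), ∑ b : Bool, Outer i b) = 2*((n:ℂ)+1) := by
        simp only [hOuter]
        exact keyLemma n c a z hz0 hz
      rw [hkey]
      rw [Nat.factorial_succ]
      push_cast
      ring


/-- The additive degeneration of the `q = 0` Koornwinder normalization identity:
`Σ_{σ∈BC_k} ∏_{B<A} [(z_{σ(A)}−z_{σ(B)}−c)(z_{σ(A)}+z_{σ(B)}−c)] /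
[(z_{σ(A)}−z_{σ(B)})(z_{σ(A)}+z_{σ(B)})] · ∏_j (z_{σ(j)}−a)/z_{σ(j)} = 2^k · k!`,
the sum running over all `2^k · k!` signed permutations. -/
theorem typeBC_symmetrization_identity
    (k : ℕ) (hk : 1 ≤ k) (c a : ℂ) (z : Fin k → ℂ)
    (hz0 : ∀ j : Fin k, z j ≠ 0)
    (hz : ∀ i j : Fin k, i ≠ j → z i ≠ z j ∧ z i ≠ -z j) :
    (∑ σ : Equiv.Perm (Fin k), ∑ ε : Fin k → Bool,
      (∏ B : Fin k, ∏ A : Fin k,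
        if B < A then
          ((signedApply z σ ε A - signedApply z σ ε B - c) *
            (signedApply z σ ε A + signedApply z σ ε B - c)) /
          ((signedApply z σ ε A - signedApply z σ ε B) *
            (signedApply z σ ε A + signedApply z σ ε B))
        else 1) *
      ∏ j : Fin k, (signedApply z σ ε j - a) / signedApply z σ ε j)
    = (2 : ℂ) ^ k * (Nat.factorial k : ℂ) :=
  mainLemma k c a z hz0 hz
end

section
/- Fix an integer ℓ ≥ 2 and q ∈ ℂ with q ≠ 0 and q^m ≠ 1 for all 1 ≤ m ≤ ℓ, and let y ∈ ℂ be nonzero. Then [∏_{1≤i≠j≤ℓ} (q^{i−1}y − q^{j−1}y)] / [∏_{(i,j): 1≤i≠j≤ℓ, i≠j+1} (q^{i−1}y − q^{j}y)] = (−1)^{ℓ−1} · y^{ℓ−1} · (1−q)^{ℓ}/(1−q^{ℓ}). (This evaluates the iterated residue of ∏_{1≤i≠j≤ℓ} (y_i − y_j)/(y_i − q y_j) at the single full geometric string y_2 = q y_1, y_3 = q y_2, …, y_ℓ = q y_{ℓ−1} with y_1 = y.) -/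
open Finset

private noncomputable def Nprod (q y : ℂ) (m : ℕ) : ℂ :=
  ∏ i ∈ range m, ∏ j ∈ range m, if i ≠ j then q ^ i * y - q ^ j * y else 1

private noncomputable def Dprod (q y : ℂ) (m : ℕ) : ℂ :=
  ∏ i ∈ range m, ∏ j ∈ range m,
    if i ≠ j ∧ i ≠ j + 1 then q ^ i * y - q ^ (j + 1) * y else 1

private lemma prod_factor (q y : ℂ) (m k : ℕ) (hk : m ≤ k) :
    ∏ i ∈ range m, (q ^ i * y - q ^ k * y)
      = (∏ i ∈ range m, (q ^ i * y)) * ∏ d ∈ range m, (1 - q ^ (k - m + d + 1)) := by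
  have step1 : ∏ i ∈ range m, (q ^ i * y - q ^ k * y)
      = ∏ i ∈ range m, (q ^ i * y * (1 - q ^ (k - i))) := by
    refine prod_congr rfl ?_
    intro i hi
    rw [mem_range] at hi
    have h2 : i + (k - i) = k := by omega
    have h3 : q ^ i * q ^ (k - i) = q ^ k := by rw [← pow_add, h2]
    calc q ^ i * y - q ^ k * y = q ^ i * y - q ^ i * q ^ (k - i) * y := by rw [h3]
      _ = q ^ i * y * (1 - q ^ (k - i)) := by ring
  rw [step1, prod_mul_distrib]
  congr 1
  rw [← Finset.prod_range_reflect (fun d => 1 - q ^ (k - m + d + 1)) m]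
  refine prod_congr rfl ?_
  intro i hi
  rw [mem_range] at hi
  have h1 : k - m + (m - 1 - i) + 1 = k - i := by omega
  simp only [h1]

private lemma key1 (q y : ℂ) (m : ℕ) :
    (∏ i ∈ range m, (q ^ i * y - q ^ m * y)) * (1 - q ^ (m + 1))
      = (1 - q) * ∏ i ∈ range m, (q ^ i * y - q ^ (m + 1) * y) := by
  rw [prod_factor q y m m le_rfl, prod_factor q y m (m + 1) (by omega)]
  have h1 : ∀ d, m - m + d + 1 = d + 1 := by intro d; omega
  have h2 : ∀ d, m + 1 - m + d + 1 = d + 2 := by intro d; omega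
  simp only [h1, h2]
  have A : (∏ d ∈ range m, (1 - q ^ (d + 1))) * (1 - q ^ (m + 1))
      = ∏ d ∈ range (m + 1), (1 - q ^ (d + 1)) := (prod_range_succ _ m).symm
  have B : (1 - q) * ∏ d ∈ range m, (1 - q ^ (d + 2))
      = ∏ d ∈ range (m + 1), (1 - q ^ (d + 1)) := by
    rw [prod_range_succ' (fun d => 1 - q ^ (d + 1)) m]
    have e : ∀ x : ℕ, x + 1 + 1 = x + 2 := fun x => rfl
    simp only [e, zero_add, pow_one]
    ring
  calc (∏ i ∈ range m, (q ^ i * y)) * (∏ d ∈ range m, (1 - q ^ (d + 1))) * (1 - q ^ (m + 1))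
      = (∏ i ∈ range m, (q ^ i * y)) * ((∏ d ∈ range m, (1 - q ^ (d + 1))) * (1 - q ^ (m + 1))) := by ring
    _ = (∏ i ∈ range m, (q ^ i * y)) * ((1 - q) * ∏ d ∈ range m, (1 - q ^ (d + 2))) := by rw [A, B]
    _ = (1 - q) * ((∏ i ∈ range m, (q ^ i * y)) * ∏ d ∈ range m, (1 - q ^ (d + 2))) := by ring

private lemma key2 (q y : ℂ) (n : ℕ) :
    ∏ j ∈ range (n + 1), (q ^ (n + 1) * y - q ^ j * y)
      = (q ^ (n + 1) - 1) * y *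
        ∏ j ∈ range (n + 1), (if j ≠ n then q ^ (n + 1) * y - q ^ (j + 1) * y else 1) := by
  rw [prod_range_succ' (fun j => q ^ (n + 1) * y - q ^ j * y) n,
      prod_range_succ (fun j => if j ≠ n then q ^ (n + 1) * y - q ^ (j + 1) * y else 1) n]
  rw [if_neg (by simp)]
  have : ∀ j ∈ range n, (if j ≠ n then q ^ (n + 1) * y - q ^ (j + 1) * y else 1)
      = q ^ (n + 1) * y - q ^ (j + 1) * y := by
    intro j hj; rw [mem_range] at hj; rw [if_pos (by omega)]
  rw [prod_congr rfl this]
  ring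

private lemma peelN (q y : ℂ) (m : ℕ) :
    Nprod q y (m + 1) = Nprod q y m * (∏ i ∈ range m, (q ^ i * y - q ^ m * y))
      * (∏ j ∈ range m, (q ^ m * y - q ^ j * y)) := by
  unfold Nprod
  rw [prod_range_succ]
  have inner : ∀ i ∈ range m,
      (∏ j ∈ range (m + 1), if i ≠ j then q ^ i * y - q ^ j * y else 1)
        = (∏ j ∈ range m, if i ≠ j then q ^ i * y - q ^ j * y else 1)
          * (q ^ i * y - q ^ m * y) := by
    intro i hi; rw [mem_range] at hi
    rw [prod_range_succ, if_pos (by omega)]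
  rw [prod_congr rfl inner, prod_mul_distrib]
  rw [prod_range_succ, if_neg (by simp)]
  have last : ∀ j ∈ range m,
      (if m ≠ j then q ^ m * y - q ^ j * y else 1) = q ^ m * y - q ^ j * y := by
    intro j hj; rw [mem_range] at hj; rw [if_pos (by omega)]
  rw [prod_congr rfl last]
  ring

private lemma peelD (q y : ℂ) (m : ℕ) :
    Dprod q y (m + 1) = Dprod q y m * (∏ i ∈ range m, (q ^ i * y - q ^ (m + 1) * y))
      * (∏ j ∈ range m, (if j + 1 ≠ m then q ^ m * y - q ^ (j + 1) * y else 1)) := by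
  unfold Dprod
  rw [prod_range_succ]
  have inner : ∀ i ∈ range m,
      (∏ j ∈ range (m + 1), if i ≠ j ∧ i ≠ j + 1 then q ^ i * y - q ^ (j + 1) * y else 1)
        = (∏ j ∈ range m, if i ≠ j ∧ i ≠ j + 1 then q ^ i * y - q ^ (j + 1) * y else 1)
          * (q ^ i * y - q ^ (m + 1) * y) := by
    intro i hi; rw [mem_range] at hi
    rw [prod_range_succ, if_pos (by omega)]
  rw [prod_congr rfl inner, prod_mul_distrib]
  rw [prod_range_succ, if_neg (by simp)]
  have last : ∀ j ∈ range m,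
      (if m ≠ j ∧ m ≠ j + 1 then q ^ m * y - q ^ (j + 1) * y else 1)
        = (if j + 1 ≠ m then q ^ m * y - q ^ (j + 1) * y else 1) := by
    intro j hj; rw [mem_range] at hj
    by_cases h : j + 1 = m
    · rw [if_neg (by omega), if_neg (by omega)]
    · rw [if_pos (by omega), if_pos (by omega)]
  rw [prod_congr rfl last]
  ring

private lemma main_id (q y : ℂ) : ∀ n : ℕ,
    Nprod q y (n + 1) * (1 - q ^ (n + 1))
      = (-1 : ℂ) ^ n * y ^ n * (1 - q) ^ (n + 1) * Dprod q y (n + 1) := by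
  intro n
  induction n with
  | zero =>
      simp [Nprod, Dprod]
  | succ n ih =>
      rw [peelN q y (n + 1), peelD q y (n + 1)]
      have hk1 := key1 q y (n + 1)
      have hk2 := key2 q y n
      have hk2' : ∏ j ∈ range (n + 1), (q ^ (n + 1) * y - q ^ j * y)
          = (q ^ (n + 1) - 1) * y *
            ∏ j ∈ range (n + 1), (if j + 1 ≠ n + 1 then q ^ (n + 1) * y - q ^ (j + 1) * y else 1) := by
        rw [hk2]
        congr 1
        refine prod_congr rfl ?_
        intro j hj
        by_cases h : j = n
        · rw [if_neg (by omega), if_neg (by omega)]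
        · rw [if_pos (by omega), if_pos (by omega)]
      set Nm := Nprod q y (n + 1)
      set Dm := Dprod q y (n + 1)
      set P1 := ∏ i ∈ range (n + 1), (q ^ i * y - q ^ (n + 1) * y)
      set P1' := ∏ i ∈ range (n + 1), (q ^ i * y - q ^ (n + 2) * y)
      set P2 := ∏ j ∈ range (n + 1), (q ^ (n + 1) * y - q ^ j * y)
      set Pif := ∏ j ∈ range (n + 1), (if j + 1 ≠ n + 1 then q ^ (n + 1) * y - q ^ (j + 1) * y else 1)
      linear_combination (P2 * Nm) * hk1 + ((1 - q) * P1' * Nm) * hk2'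
        - (y * (1 - q) * P1' * Pif) * ih

/-- Evaluation of the iterated residue of `∏_{i≠j} (y_i − y_j)/(y_i − q y_j)` at a single
full geometric string `y_i = q^{i−1} y`: with 0-based indices `i, j ∈ {0,…,ℓ−1}`,
`[∏_{i≠j} (q^i y − q^j y)] / [∏_{i≠j, i≠j+1} (q^i y − q^{j+1} y)]
  = (−1)^{ℓ−1} y^{ℓ−1} (1−q)^ℓ/(1−q^ℓ)`. -/
theorem single_string_residue_typeA
    (ℓ : ℕ) (hℓ : 2 ≤ ℓ) (q : ℂ) (hq0 : q ≠ 0)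
    (hq : ∀ m : ℕ, 1 ≤ m → m ≤ ℓ → q ^ m ≠ 1)
    (y : ℂ) (hy : y ≠ 0) :
    (∏ i : Fin ℓ, ∏ j : Fin ℓ,
        if i ≠ j then q ^ (i : ℕ) * y - q ^ (j : ℕ) * y else 1) /
      (∏ i : Fin ℓ, ∏ j : Fin ℓ,
        if i ≠ j ∧ (i : ℕ) ≠ (j : ℕ) + 1 then q ^ (i : ℕ) * y - q ^ ((j : ℕ) + 1) * y else 1)
    = (-1 : ℂ) ^ (ℓ - 1) * y ^ (ℓ - 1) * (1 - q) ^ ℓ / (1 - q ^ ℓ) := by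
  have hN : (∏ i : Fin ℓ, ∏ j : Fin ℓ,
      if i ≠ j then q ^ (i : ℕ) * y - q ^ (j : ℕ) * y else 1) = Nprod q y ℓ := by
    unfold Nprod
    rw [← Fin.prod_univ_eq_prod_range
      (fun i => ∏ j ∈ range ℓ, if i ≠ j then q ^ i * y - q ^ j * y else 1) ℓ]
    refine Finset.prod_congr rfl ?_
    intro i _
    rw [← Fin.prod_univ_eq_prod_range
      (fun j => if (i : ℕ) ≠ j then q ^ (i : ℕ) * y - q ^ j * y else 1) ℓ]
    refine Finset.prod_congr rfl ?_
    intro j _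
    congr 1
    simp [Fin.ext_iff, ne_eq]
  have hD : (∏ i : Fin ℓ, ∏ j : Fin ℓ,
      if i ≠ j ∧ (i : ℕ) ≠ (j : ℕ) + 1 then q ^ (i : ℕ) * y - q ^ ((j : ℕ) + 1) * y else 1)
      = Dprod q y ℓ := by
    unfold Dprod
    rw [← Fin.prod_univ_eq_prod_range
      (fun i => ∏ j ∈ range ℓ, if i ≠ j ∧ i ≠ j + 1 then q ^ i * y - q ^ (j + 1) * y else 1) ℓ]
    refine Finset.prod_congr rfl ?_
    intro i _
    rw [← Fin.prod_univ_eq_prod_range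
      (fun j => if (i : ℕ) ≠ j ∧ (i : ℕ) ≠ j + 1 then q ^ (i : ℕ) * y - q ^ (j + 1) * y else 1) ℓ]
    refine Finset.prod_congr rfl ?_
    intro j _
    congr 1
    simp [Fin.ext_iff, ne_eq]
  rw [hN, hD]
  have hqℓ : (1 : ℂ) - q ^ ℓ ≠ 0 :=
    sub_ne_zero.mpr (Ne.symm (hq ℓ (by omega) le_rfl))
  have hDne : Dprod q y ℓ ≠ 0 := by
    unfold Dprod
    rw [Finset.prod_ne_zero_iff]
    intro i hi
    rw [Finset.prod_ne_zero_iff]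
    intro j hj
    rw [mem_range] at hi hj
    by_cases h : i ≠ j ∧ i ≠ j + 1
    · rw [if_pos h]
      intro heq
      have hqq : q ^ i = q ^ (j + 1) :=
        mul_right_cancel₀ hy (sub_eq_zero.mp heq)
      rcases lt_or_gt_of_ne h.2 with hlt | hgt
      · have e : i + (j + 1 - i) = j + 1 := by omega
        have hsplit : q ^ i * q ^ (j + 1 - i) = q ^ i * 1 := by
          rw [mul_one, ← pow_add, e]
          exact hqq.symm
        have := mul_left_cancel₀ (pow_ne_zero i hq0) hsplit
        exact hq (j + 1 - i) (by omega) (by omega) this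
      · have e : j + 1 + (i - (j + 1)) = i := by omega
        have hsplit : q ^ (j + 1) * q ^ (i - (j + 1)) = q ^ (j + 1) * 1 := by
          rw [mul_one, ← pow_add, e]
          exact hqq
        have := mul_left_cancel₀ (pow_ne_zero (j + 1) hq0) hsplit
        exact hq (i - (j + 1)) (by omega) (by omega) this
    · rw [if_neg h]; exact one_ne_zero
  obtain ⟨n, rfl⟩ : ∃ n, ℓ = n + 1 := ⟨ℓ - 1, by omega⟩
  have hmain := main_id q y n
  rw [div_eq_div_iff hDne hqℓ]
  simp only [Nat.add_sub_cancel]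
  linear_combination hmain
end

section
/- Fix integers ℓ, ℓ' ≥ 1 and let q, y, y' be complex numbers with q ≠ 0 such that all denominators below are nonzero. Then ∏_{i=1}^{ℓ} ∏_{j=1}^{ℓ'} [(y q^{i−1} − y' q^{j−1})(y' q^{j−1} − y q^{i−1})] / [(y q^{i−1} − y' q^{j})(y' q^{j} − y q^{i})] = q^{−ℓℓ'} · (y − y')(y q^{ℓ} − y' q^{ℓ'}) / [(y q^{ℓ} − y')(y − y' q^{ℓ'})]. (This is the cross term between two geometric q-strings, of lengths ℓ and ℓ', based at y and y'.) -/
/-!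
With `D i j = y q^i - y' q^j` one has `D (i+1) (j+1) = q D i j`, so the `(i, j)` factor is
`q⁻¹ · D i j D (i+1) (j+1) / (D i (j+1) D (i+1) j)`. The double product of these cross ratios
telescopes in both directions down to the four corners `D 0 0`, `D ℓ ℓ'`, `D 0 ℓ'`, `D ℓ 0`.
-/

open Finset

theorem Finset.prod_range_div₀ {G₀ : Type*} [CommGroupWithZero G₀] (f : ℕ → G₀)
    {n : ℕ} (hn : n ≠ 0) (hf : ∀ i, 0 < i → i < n → f i ≠ 0) :
    ∏ i ∈ range n, f (i + 1) / f i = f n / f 0 := by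
  induction n with
  | zero => exact absurd rfl hn
  | succ n ih =>
    rcases Nat.eq_zero_or_pos n with rfl | hpos
    · simp
    rw [prod_range_succ, ih hpos.ne' fun i hi hin => hf i hi (by omega),
      div_mul_div_cancel₀' (hf n hpos (by omega))]

theorem Finset.prod_range_prod_range_cross_ratio {G₀ : Type*} [CommGroupWithZero G₀]
    (F : ℕ → ℕ → G₀) {m n : ℕ} (hm : m ≠ 0) (hn : n ≠ 0)
    (hright : ∀ i < m, ∀ j < n, F i (j + 1) ≠ 0)
    (hup : ∀ i < m, ∀ j < n, F (i + 1) j ≠ 0) :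
    ∏ i ∈ range m, ∏ j ∈ range n, F i j * F (i + 1) (j + 1) / (F i (j + 1) * F (i + 1) j) =
      F 0 0 * F m n / (F 0 n * F m 0) := by
  have hrow : ∀ i ≤ m, ∏ j ∈ range n, F i (j + 1) / F i j = F i n / F i 0 := by
    intro i hi
    refine prod_range_div₀ (F i) hn fun j hj hjn => ?_
    rcases hi.lt_or_eq with hi | rfl
    · obtain ⟨j, rfl⟩ := Nat.exists_eq_add_one_of_ne_zero hj.ne'
      exact hright i hi j (by omega)
    · obtain ⟨i, rfl⟩ := Nat.exists_eq_add_one_of_ne_zero hm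
      exact hup i (by omega) j hjn
  calc ∏ i ∈ range m, ∏ j ∈ range n,
        F i j * F (i + 1) (j + 1) / (F i (j + 1) * F (i + 1) j)
    _ = ∏ i ∈ range m, (∏ j ∈ range n, F (i + 1) (j + 1) / F (i + 1) j) /
          ∏ j ∈ range n, F i (j + 1) / F i j := by
        refine prod_congr rfl fun i _ => ?_
        rw [← prod_div_distrib]
        refine prod_congr rfl fun j _ => ?_
        rw [div_div_div_eq, mul_comm (F i j), mul_comm (F i (j + 1))]
    _ = ∏ i ∈ range m, F (i + 1) n / F (i + 1) 0 / (F i n / F i 0) := by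
        refine prod_congr rfl fun i hi => ?_
        rw [mem_range] at hi
        rw [hrow i hi.le, hrow (i + 1) hi]
    _ = F m n / F m 0 / (F 0 n / F 0 0) := by
        refine prod_range_div₀ (fun i => F i n / F i 0) hm fun i hi him => ?_
        obtain ⟨n, rfl⟩ := Nat.exists_eq_add_one_of_ne_zero hn
        obtain ⟨i, rfl⟩ := Nat.exists_eq_add_one_of_ne_zero hi.ne'
        exact div_ne_zero (hright _ him n (by omega)) (hup i (by omega) 0 (by omega))
    _ = F 0 0 * F m n / (F 0 n * F m 0) := by
        rw [div_div_div_eq, mul_comm (F m n), mul_comm (F m 0)]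

theorem geom_string_cross_factor_eq {K : Type*} [Field K] {q : K} (hq : q ≠ 0) (y y' : K)
    (i j : ℕ) :
    (y * q ^ i - y' * q ^ j) * (y' * q ^ j - y * q ^ i) /
        ((y * q ^ i - y' * q ^ (j + 1)) * (y' * q ^ j - y * q ^ (i + 1))) =
      q⁻¹ * ((y * q ^ i - y' * q ^ j) * (y * q ^ (i + 1) - y' * q ^ (j + 1)) /
        ((y * q ^ i - y' * q ^ (j + 1)) * (y * q ^ (i + 1) - y' * q ^ j))) := by
  rw [show y * q ^ (i + 1) - y' * q ^ (j + 1) = q * (y * q ^ i - y' * q ^ j) by ring,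
    show y * q ^ (i + 1) - y' * q ^ j = -(y' * q ^ j - y * q ^ (i + 1)) by ring,
    show y' * q ^ j - y * q ^ i = -(y * q ^ i - y' * q ^ j) by ring,
    mul_left_comm _ q, mul_div_assoc q, inv_mul_cancel_left₀ hq, mul_neg, mul_neg, div_neg,
    neg_div]

/-- The cross term between two geometric `q`-strings of lengths `ℓ` and `ℓ'` based at `y`
and `y'` (0-based indices): `∏_{i<ℓ} ∏_{j<ℓ'} (y q^i − y' q^j)(y' q^j − y q^i) /
[(y q^i − y' q^{j+1})(y' q^j − y q^{i+1})] = q^{−ℓℓ'} (y−y')(y q^ℓ − y' q^{ℓ'}) /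
[(y q^ℓ − y')(y − y' q^{ℓ'})]`. -/
theorem cross_string_term_typeA
    (ℓ ℓ' : ℕ) (hℓ : 1 ≤ ℓ) (hℓ' : 1 ≤ ℓ') (q y y' : ℂ) (hq : q ≠ 0)
    (hden : ∀ i ∈ Finset.range ℓ, ∀ j ∈ Finset.range ℓ',
      y * q ^ i - y' * q ^ (j + 1) ≠ 0 ∧ y' * q ^ j - y * q ^ (i + 1) ≠ 0) :
    (∏ i ∈ Finset.range ℓ, ∏ j ∈ Finset.range ℓ',
        ((y * q ^ i - y' * q ^ j) * (y' * q ^ j - y * q ^ i)) /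
          ((y * q ^ i - y' * q ^ (j + 1)) * (y' * q ^ j - y * q ^ (i + 1))))
    = q ^ (-(ℓ * ℓ' : ℤ)) *
        ((y - y') * (y * q ^ ℓ - y' * q ^ ℓ')) / ((y * q ^ ℓ - y') * (y - y' * q ^ ℓ')) := by
  have hcorners := prod_range_prod_range_cross_ratio (fun i j => y * q ^ i - y' * q ^ j)
    (Nat.one_le_iff_ne_zero.1 hℓ) (Nat.one_le_iff_ne_zero.1 hℓ')
    (fun i hi j hj => (hden i (mem_range.2 hi) j (mem_range.2 hj)).1)
    (fun i hi j hj =>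
      sub_ne_zero.2 (sub_ne_zero.1 (hden i (mem_range.2 hi) j (mem_range.2 hj)).2).symm)
  simp only [pow_zero, mul_one] at hcorners
  simp only [geom_string_cross_factor_eq hq, prod_mul_distrib, prod_const, card_range, hcorners]
  rw [← pow_mul, inv_pow, ← zpow_natCast, ← zpow_neg, mul_comm (y - y' * q ^ ℓ'),
    Nat.cast_mul, mul_comm (ℓ' : ℤ)]
  exact (mul_div_assoc _ _ _).symm
end

section
/- Fix an integer ℓ ≥ 1 and let q, y be complex numbers with q ≠ 0 such that all denominators below are nonzero. Then ∏_{1≤i<j≤ℓ} (1 − q^{i+j−2} y²)² / [q·(1 − q^{i+j−3} y²)(1 − q^{i+j−1} y²)] = q^{−ℓ(ℓ−1)/2} · (1 − q^{ℓ−1} y²)/(1 − y²) · ∏_{m=1}^{ℓ−1} (1 − q^{2m−1} y²)/(1 − q^{2m} y²). (This evaluates ∏_{1≤i<j≤ℓ} (1 − y_i y_j)² / ((q − y_i y_j)(1 − q y_i y_j)) along the single geometric string y_i = q^{i−1} y.) -/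
open Finset

private lemma tele_up (g : ℕ → ℂ) :
    ∀ n, (∀ i < n, g i ≠ 0) → g 0 * ∏ i ∈ range n, g (i + 1) / g i = g n := by
  intro n
  induction n with
  | zero => simp
  | succ n ih =>
    intro h
    have hn : g n ≠ 0 := h n (Nat.lt_succ_self n)
    rw [prod_range_succ, ← mul_assoc, ih (fun i hi => h i (Nat.lt_succ_of_lt hi))]
    field_simp

private lemma tele_down (g : ℕ → ℂ) :
    ∀ n, (∀ i < n, g (i + 1) ≠ 0) → (∏ i ∈ range n, g i / g (i + 1)) * g n = g 0 := by
  intro n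
  induction n with
  | zero => simp
  | succ n ih =>
    intro h
    have hn : g (n + 1) ≠ 0 := h n (Nat.lt_succ_self n)
    rw [prod_range_succ, mul_assoc, div_mul_cancel₀ _ hn,
      ih (fun i hi => h i (Nat.lt_succ_of_lt hi))]

private lemma col_lemma (q y : ℂ) (n : ℕ) (hn : 1 ≤ n)
    (h1 : ∀ i < n, 1 - q ^ (i + n - 1) * y ^ 2 ≠ 0)
    (h2 : ∀ i < n, 1 - q ^ (i + n + 1) * y ^ 2 ≠ 0) :
    ∏ i ∈ range n, (1 - q ^ (i + n) * y ^ 2) ^ 2 /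
        (q * (1 - q ^ (i + n - 1) * y ^ 2) * (1 - q ^ (i + n + 1) * y ^ 2))
    = (q ^ n)⁻¹ * ((1 - q ^ n * y ^ 2) * (1 - q ^ (2 * n - 1) * y ^ 2)) /
        ((1 - q ^ (n - 1) * y ^ 2) * (1 - q ^ (2 * n) * y ^ 2)) := by
  set A : ℕ → ℂ := fun k => 1 - q ^ k * y ^ 2 with hA
  have step : ∀ i ∈ range n,
      (A (i + n)) ^ 2 / (q * A (i + n - 1) * A (i + n + 1))
      = q⁻¹ * ((A (i + n) / A (i + n - 1)) * (A (i + n) / A (i + n + 1))) := by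
    intro i _
    simp only [div_eq_mul_inv, mul_inv]
    ring
  rw [prod_congr rfl step, prod_mul_distrib, prod_mul_distrib, prod_const]
  -- telescope 1
  have shift1 : ∀ i ∈ range n, A (i + n) / A (i + n - 1)
      = (fun i => A (i + n - 1)) (i + 1) / (fun i => A (i + n - 1)) i := by
    intro i _
    have : i + 1 + n - 1 = i + n := by omega
    simp [this]
  have h0 : A (0 + n - 1) ≠ 0 := h1 0 (by omega)
  have t1 : ∏ i ∈ range n, A (i + n) / A (i + n - 1) = A (n + n - 1) / A (n - 1) := by
    rw [prod_congr rfl shift1]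
    have := tele_up (fun i => A (i + n - 1)) n (fun i hi => h1 i hi)
    simp only at this ⊢
    rw [eq_div_iff (by simpa using h0), mul_comm]
    simpa using this
  have t2 : ∏ i ∈ range n, A (i + n) / A (i + n + 1) = A n / A (n + n) := by
    have hnn : A (n + n) ≠ 0 := by
      have := h2 (n - 1) (by omega)
      have e : n - 1 + n + 1 = n + n := by omega
      rwa [e] at this
    have := tele_down (fun i => A (i + n)) n (fun i hi => by
      have := h2 i hi; have e : i + n + 1 = i + 1 + n := by omega
      rwa [e] at this)
    have e3 : ∀ x : ℕ, x + 1 + n = x + n + 1 := fun x => by omega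
    simp only [e3] at this
    rw [eq_div_iff hnn]
    simpa [Nat.zero_add] using this
  rw [t1, t2]
  have e1 : n + n - 1 = 2 * n - 1 := by omega
  have e2 : n + n = 2 * n := by omega
  rw [e1, e2, inv_pow, card_range]
  simp only [div_eq_mul_inv, mul_inv]
  ring

private lemma aux_main (q y : ℂ) (hq : q ≠ 0) (hy : 1 - y ^ 2 ≠ 0) :
    ∀ ℓ : ℕ, 1 ≤ ℓ →
    (∀ i j : ℕ, i < j → j < ℓ →
      1 - q ^ (i + j - 1) * y ^ 2 ≠ 0 ∧ 1 - q ^ (i + j + 1) * y ^ 2 ≠ 0) →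
    ∏ j ∈ range ℓ, ∏ i ∈ range j,
        (1 - q ^ (i + j) * y ^ 2) ^ 2 /
          (q * (1 - q ^ (i + j - 1) * y ^ 2) * (1 - q ^ (i + j + 1) * y ^ 2))
    = (q ^ (ℓ * (ℓ - 1) / 2))⁻¹ * ((1 - q ^ (ℓ - 1) * y ^ 2) / (1 - y ^ 2)) *
        ∏ m ∈ Finset.Icc 1 (ℓ - 1),
          (1 - q ^ (2 * m - 1) * y ^ 2) / (1 - q ^ (2 * m) * y ^ 2) := by
  intro ℓ
  induction ℓ with
  | zero => omega
  | succ n ih =>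
    intro _ h
    rcases Nat.eq_zero_or_pos n with rfl | hn
    · simp [div_self hy]
    -- n ≥ 1
    rw [prod_range_succ, ih hn (fun i j hij hj => h i j hij (Nat.lt_succ_of_lt hj))]
    have hcol := col_lemma q y n hn
      (fun i hi => (h i n hi (Nat.lt_succ_self n)).1)
      (fun i hi => (h i n hi (Nat.lt_succ_self n)).2)
    rw [hcol]
    obtain ⟨m, rfl⟩ : ∃ m, n = m + 1 := ⟨n - 1, by omega⟩
    -- simplify nat indices
    have e1 : m + 1 - 1 = m := by omega
    have e2 : m + 1 + 1 - 1 = m + 1 := by omega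
    have e3 : 2 * (m + 1) - 1 = 2 * m + 1 := by omega
    have e4 : (m + 1 + 1) * (m + 1) / 2 = (m + 1) * m / 2 + (m + 1) := by
      rw [show (m + 1 + 1) * (m + 1) = (m + 1) * m + (m + 1) * 2 from by ring,
        Nat.add_mul_div_right _ _ (by norm_num)]
    rw [e1, e2, e3, e4]
    rw [show Finset.Icc 1 (m + 1) = Finset.Icc 1 (m + 1 - 1 + 1) from by rw [e1]]
    rw [Finset.prod_Icc_succ_top (by omega), e1]
    have e7 : (m + 1) * (m + 1 - 1) / 2 = (m + 1) * m / 2 := by rw [e1]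
    have h5 : (1 - q ^ m * y ^ 2) ≠ 0 := by
      have := (h 0 (m + 1) (by omega) (by omega)).1
      simpa using this
    have h6 : (1 - q ^ (2 * (m + 1)) * y ^ 2) ≠ 0 := by
      have := (h m (m + 1) (by omega) (by omega)).2
      have e : m + (m + 1) + 1 = 2 * (m + 1) := by omega
      rwa [e] at this
    rw [e3]
    have hq1 : (q : ℂ) ^ ((m + 1) * m / 2) ≠ 0 := pow_ne_zero _ hq
    have hq2 : (q : ℂ) ^ (m + 1) ≠ 0 := pow_ne_zero _ hq
    rw [show (q : ℂ) ^ ((m + 1) * m / 2 + (m + 1)) = q ^ ((m + 1) * m / 2) * q ^ (m + 1)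
      from pow_add q _ _]
    set P := ∏ k ∈ Icc 1 m, (1 - q ^ (2 * k - 1) * y ^ 2) / (1 - q ^ (2 * k) * y ^ 2) with hP
    set A0 := 1 - y ^ 2
    set B := 1 - q ^ m * y ^ 2
    set C := 1 - q ^ (m + 1) * y ^ 2
    set D := 1 - q ^ (2 * m + 1) * y ^ 2
    set E := 1 - q ^ (2 * (m + 1)) * y ^ 2
    set Q1 := q ^ ((m + 1) * m / 2)
    set Q2 := q ^ (m + 1)
    clear_value P A0 B C D E Q1 Q2
    field_simp


/-- Evaluation of `∏_{i<j} (1 − y_i y_j)² / ((q − y_i y_j)(1 − q y_i y_j))` along a single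
geometric string `y_i = q^{i−1} y`: with 0-based indices `i < j` in `{0,…,ℓ−1}`,
`∏_{i<j} (1 − q^{i+j} y²)² / [q(1 − q^{i+j−1} y²)(1 − q^{i+j+1} y²)]
  = q^{−ℓ(ℓ−1)/2} (1 − q^{ℓ−1} y²)/(1 − y²) ∏_{m=1}^{ℓ−1} (1 − q^{2m−1} y²)/(1 − q^{2m} y²)`. -/
theorem single_string_substitution_typeBC
    (ℓ : ℕ) (hℓ : 1 ≤ ℓ) (q y : ℂ) (hq : q ≠ 0)
    (hden1 : ∀ i j : Fin ℓ, i < j →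
      1 - q ^ ((i : ℕ) + (j : ℕ) - 1) * y ^ 2 ≠ 0 ∧
      1 - q ^ ((i : ℕ) + (j : ℕ) + 1) * y ^ 2 ≠ 0)
    (hden2 : 1 - y ^ 2 ≠ 0)
    (hden3 : ∀ m : ℕ, 1 ≤ m → m ≤ ℓ - 1 → 1 - q ^ (2 * m) * y ^ 2 ≠ 0) :
    (∏ i : Fin ℓ, ∏ j : Fin ℓ,
        if i < j then
          (1 - q ^ ((i : ℕ) + (j : ℕ)) * y ^ 2) ^ 2 /
            (q * (1 - q ^ ((i : ℕ) + (j : ℕ) - 1) * y ^ 2) *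
              (1 - q ^ ((i : ℕ) + (j : ℕ) + 1) * y ^ 2))
        else 1)
    = (q ^ (ℓ * (ℓ - 1) / 2))⁻¹ * ((1 - q ^ (ℓ - 1) * y ^ 2) / (1 - y ^ 2)) *
        ∏ m ∈ Finset.Icc 1 (ℓ - 1),
          (1 - q ^ (2 * m - 1) * y ^ 2) / (1 - q ^ (2 * m) * y ^ 2) := by
  have key := aux_main q y hq hden2 ℓ hℓ (fun i j hij hj =>
    hden1 ⟨i, lt_trans hij hj⟩ ⟨j, hj⟩ (Fin.mk_lt_mk.mpr hij))
  rw [← key]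
  -- convert the Fin double product to a range double product
  let F : ℕ → ℕ → ℂ := fun i j =>
    (1 - q ^ (i + j) * y ^ 2) ^ 2 /
      (q * (1 - q ^ (i + j - 1) * y ^ 2) * (1 - q ^ (i + j + 1) * y ^ 2))
  have step1 : (∏ i : Fin ℓ, ∏ j : Fin ℓ, if i < j then F i j else 1)
      = ∏ i ∈ range ℓ, ∏ j ∈ range ℓ, if i < j then F i j else 1 := by
    rw [← Fin.prod_univ_eq_prod_range (fun i => ∏ j ∈ range ℓ, if i < j then F i j else 1) ℓ]
    refine Finset.prod_congr rfl fun i _ => ?_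
    rw [← Fin.prod_univ_eq_prod_range (fun j => if (i : ℕ) < j then F i j else 1) ℓ]
    refine Finset.prod_congr rfl fun j _ => ?_
    simp only [Fin.lt_def]
  have step2 : ∀ j ∈ range ℓ,
      (∏ i ∈ range ℓ, if i < j then F i j else 1) = ∏ i ∈ range j, F i j := by
    intro j hj
    rw [← Finset.prod_subset (Finset.range_subset_range.mpr (le_of_lt (mem_range.mp hj)))
      (fun x _ hx => by rw [if_neg (by simpa using hx)])]
    exact Finset.prod_congr rfl fun x hx => if_pos (mem_range.mp hx)
  calc (∏ i : Fin ℓ, ∏ j : Fin ℓ, if i < j then F i j else 1)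
      = ∏ i ∈ range ℓ, ∏ j ∈ range ℓ, if i < j then F i j else 1 := step1
    _ = ∏ j ∈ range ℓ, ∏ i ∈ range ℓ, if i < j then F i j else 1 := Finset.prod_comm
    _ = ∏ j ∈ range ℓ, ∏ i ∈ range j, F i j := Finset.prod_congr rfl step2
end

section
/- Fix k ≥ 2 and c > 0. For every subset A ⊆ {1,…,k−1}, writing A^c = {1,…,k−1}∖A, the rational functions R_A and R_{A^c} satisfy R_A(z) = R_{A^c}(−z) for every z ∈ ℂ at which both sides are defined; moreover ζ^A(0) = ζ^{A^c}(0) as points of ℂ^k, so that F(ζ^A(0)) = F(ζ^{A^c}(0)) for every function F : ℂ^k → ℂ. -/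
open scoped Classical

/-- The complement `B ∖ {k}` of `A` inside `{1,…,k−1}` (non-last indices of `Fin (m+1)`). -/
def Bcomp {m : ℕ} (A : Finset (Fin (m + 1))) : Finset (Fin (m + 1)) :=
  (Finset.univ.erase (Fin.last m)) \ A

/-- The rank of `x` in `S`: the number of elements of `S` that are `≥ x` (so the largest
element of `S` has rank `1`). -/
def rankIn {m : ℕ} (S : Finset (Fin (m + 1))) (x : Fin (m + 1)) : ℕ :=
  (S.filter (fun t => x ≤ t)).card

/-- The substitution `ζ^A(z) : ℂ → ℂ^k` attached to a one-string diagram `A ⊆ {1,…,k−1}`: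
`ζ_k = z`, `ζ_{p_i} = z + i·c` for the elements `p_b < ⋯ < p_1` of `B∖{k}`, and
`ζ_{q_i} = −z + i·c` for the elements `q_a < ⋯ < q_1` of `A`. -/
noncomputable def zetaSub {m : ℕ} (c : ℝ) (A : Finset (Fin (m + 1))) (z : ℂ)
    (x : Fin (m + 1)) : ℂ :=
  if x = Fin.last m then z
  else if x ∈ A then -z + (rankIn A x : ℂ) * (c : ℂ)
  else z + (rankIn (Bcomp A) x : ℂ) * (c : ℂ)

/-- Membership in `D_A`: the pairs `(q_{i+1}, q_i)` of consecutive elements of `A`, the pairs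
`(p_{i+1}, p_i)` of consecutive elements of `B∖{k}`, and the pair `(p_1, k)` when `b ≥ 1`. -/
def InDA {m : ℕ} (A : Finset (Fin (m + 1))) (i j : Fin (m + 1)) : Prop :=
  (i ∈ A ∧ j ∈ A ∧ i < j ∧ ∀ t ∈ A, ¬(i < t ∧ t < j)) ∨
  (i ∈ Bcomp A ∧ j ∈ Bcomp A ∧ i < j ∧ ∀ t ∈ Bcomp A, ¬(i < t ∧ t < j)) ∨
  (j = Fin.last m ∧ i ∈ Bcomp A ∧ ∀ t ∈ Bcomp A, t ≤ i)

/-- The exceptional plus-pair `(q_1, k)` (present if `a ≥ 1`), `q_1 = max A`. -/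
def IsExcPair {m : ℕ} (A : Finset (Fin (m + 1))) (i j : Fin (m + 1)) : Prop :=
  j = Fin.last m ∧ i ∈ A ∧ ∀ t ∈ A, t ≤ i

/-- The numerator `∏_{1≤i<j≤k} (ζ_i − ζ_j)(ζ_i + ζ_j)` of `R_A(z)`, with `ζ = ζ^A(z)`. -/
noncomputable def numRA {m : ℕ} (c : ℝ) (A : Finset (Fin (m + 1))) (z : ℂ) : ℂ :=
  ∏ i : Fin (m + 1), ∏ j : Fin (m + 1),
    if i < j then (zetaSub c A z i - zetaSub c A z j) * (zetaSub c A z i + zetaSub c A z j)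
    else 1

/-- The denominator
`∏_{i<j, (i,j)∉D_A} (ζ_i − ζ_j − c) · ∏_{i<j, (i,j)≠(q_1,k)} (ζ_i + ζ_j − c)` of `R_A(z)`. -/
noncomputable def denRA {m : ℕ} (c : ℝ) (A : Finset (Fin (m + 1))) (z : ℂ) : ℂ :=
  (∏ i : Fin (m + 1), ∏ j : Fin (m + 1),
    if i < j ∧ ¬ InDA A i j then zetaSub c A z i - zetaSub c A z j - (c : ℂ) else 1) *
  (∏ i : Fin (m + 1), ∏ j : Fin (m + 1),
    if i < j ∧ ¬ IsExcPair A i j then zetaSub c A z i + zetaSub c A z j - (c : ℂ) else 1)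

/-- The iterated-residue rational function `R_A(z)` of a one-string diagram. -/
noncomputable def RA {m : ℕ} (c : ℝ) (A : Finset (Fin (m + 1))) (z : ℂ) : ℂ :=
  numRA c A z / denRA c A z

/-- Lemma 8.5 (`codeTranspose`): replacing `A` by its complement `A^c` inside `{1,…,k−1}`
(i.e. flipping the plus/minus arrows adjacent to `k`) reflects the variable:
`R_A(z) = R_{A^c}(−z)` wherever both sides are defined, and `ζ^A(0) = ζ^{A^c}(0)`, so
`F(ζ^A(0)) = F(ζ^{A^c}(0))` for every `F`. -/
theorem one_string_complement_reflection
    (m : ℕ) (hm : 1 ≤ m) (c : ℝ) (hc : 0 < c)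
    (A : Finset (Fin (m + 1))) (hA : A ⊆ Finset.univ.erase (Fin.last m)) :
    (∀ z : ℂ, denRA c A z ≠ 0 → denRA c (Bcomp A) (-z) ≠ 0 →
      RA c A z = RA c (Bcomp A) (-z)) ∧
    zetaSub c A 0 = zetaSub c (Bcomp A) 0 ∧
    ∀ F : (Fin (m + 1) → ℂ) → ℂ, F (zetaSub c A 0) = F (zetaSub c (Bcomp A) 0) := by

  have hBB : Bcomp (Bcomp A) = A := by
    unfold Bcomp
    rw [Finset.sdiff_sdiff_self_left, Finset.inter_eq_right.mpr hA]
  have hlastA : Fin.last m ∉ A := fun h => (Finset.mem_erase.mp (hA h)).1 rfl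
  have hlastB : Fin.last m ∉ Bcomp A := by
    intro h
    exact (Finset.mem_erase.mp (Finset.mem_sdiff.mp h).1).1 rfl
  have hzlast : ∀ (S : Finset (Fin (m + 1))) (z : ℂ),
      zetaSub c S z (Fin.last m) = z := by
    intro S z; simp [zetaSub]
  have hzeta : ∀ (z : ℂ) (x : Fin (m + 1)), x ≠ Fin.last m →
      zetaSub c (Bcomp A) (-z) x = zetaSub c A z x := by
    intro z x hx
    unfold zetaSub
    rw [if_neg hx, if_neg hx]
    by_cases hxA : x ∈ A
    · have hxB : x ∉ Bcomp A := by simp [Bcomp, hxA]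
      rw [if_neg hxB, if_pos hxA, hBB]
    · have hxB : x ∈ Bcomp A := by
        simp [Bcomp, Finset.mem_sdiff, Finset.mem_erase, hx, hxA]
      rw [if_pos hxB, if_neg hxA, neg_neg]
  have h1 : ∀ i, InDA A i (Fin.last m) ↔ IsExcPair (Bcomp A) i (Fin.last m) := by
    intro i
    unfold InDA IsExcPair
    constructor
    · rintro (⟨_, h, _⟩ | ⟨_, h, _⟩ | h)
      · exact absurd h hlastA
      · exact absurd h hlastB
      · exact h
    · exact fun h => Or.inr (Or.inr h)
  have h2 : ∀ i, InDA (Bcomp A) i (Fin.last m) ↔ IsExcPair A i (Fin.last m) := by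
    intro i
    unfold InDA IsExcPair
    rw [hBB]
    constructor
    · rintro (⟨_, h, _⟩ | ⟨_, h, _⟩ | h)
      · exact absurd h hlastB
      · exact absurd h hlastA
      · exact h
    · exact fun h => Or.inr (Or.inr h)
  have hD : ∀ i j, j ≠ Fin.last m → (InDA A i j ↔ InDA (Bcomp A) i j) := by
    intro i j hj
    unfold InDA
    rw [hBB]
    constructor
    · rintro (h | h | ⟨h, _⟩)
      exacts [Or.inr (Or.inl h), Or.inl h, absurd h hj]
    · rintro (h | h | ⟨h, _⟩)
      exacts [Or.inr (Or.inl h), Or.inl h, absurd h hj]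
  have hnum : ∀ z : ℂ, numRA c A z = numRA c (Bcomp A) (-z) := by
    intro z
    unfold numRA
    refine Finset.prod_congr rfl fun i _ => Finset.prod_congr rfl fun j _ => ?_
    by_cases hij : i < j
    · have hi : i ≠ Fin.last m := (lt_of_lt_of_le hij (Fin.le_last j)).ne
      rw [if_pos hij, if_pos hij, hzeta z i hi]
      by_cases hjl : j = Fin.last m
      · subst hjl
        rw [hzlast, hzlast]
        ring
      · rw [hzeta z j hjl]
    · rw [if_neg hij, if_neg hij]
  have hden : ∀ z : ℂ, denRA c A z = denRA c (Bcomp A) (-z) := by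
    intro z
    unfold denRA
    rw [← Finset.prod_mul_distrib, ← Finset.prod_mul_distrib]
    refine Finset.prod_congr rfl fun i _ => ?_
    rw [← Finset.prod_mul_distrib, ← Finset.prod_mul_distrib]
    refine Finset.prod_congr rfl fun j _ => ?_
    by_cases hij : i < j
    · have hi : i ≠ Fin.last m := (lt_of_lt_of_le hij (Fin.le_last j)).ne
      by_cases hjl : j = Fin.last m
      · subst hjl
        rw [hzlast, hzlast, hzeta z i hi]
        have c1 := h1 i
        have c2 := h2 i
        by_cases hd : InDA A i (Fin.last m) <;>
          by_cases he : IsExcPair A i (Fin.last m) <;>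
          simp only [hij, hd, he, iff_true, iff_false, c1.symm, c2, eq_self_iff_true,
            not_true, not_false_iff, true_and, and_true, and_false, if_true, if_false,
            if_neg, if_pos] <;>
          simp [hd, he, ← c1, c2, hij] <;> ring
      · rw [hzeta z i hi, hzeta z j hjl]
        have e1 : ¬ IsExcPair A i j := fun h => hjl h.1
        have e2 : ¬ IsExcPair (Bcomp A) i j := fun h => hjl h.1
        simp [hD i j hjl, e1, e2]
    · simp [hij]
  have hz0 : zetaSub c A 0 = zetaSub c (Bcomp A) 0 := by
    funext x
    by_cases hx : x = Fin.last m
    · subst hx; rw [hzlast, hzlast]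
    · have h := hzeta 0 x hx
      rw [neg_zero] at h
      exact h.symm
  refine ⟨fun z _ _ => ?_, hz0, fun F => by rw [hz0]⟩
  unfold RA
  rw [hnum z, hden z]
end
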